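/- arXiv:2311.15765 — 8 statements merged into one kernel-verified Lean document; each statement's English description precedes it below -/
import Mathlib

section
/- Let z1, z2 : ℝ → ℂ be differentiable (in the real time variable) and define the real-valued functions x0(t) = Re(z1(t)+z2(t)), y0(t) = Im(z1(t)+z2(t)), η(t) = Re(z1(t)−z2(t)), ξ(t) = Im(z1(t)−z2(t)). Assume that for every t ∈ ℝ one has η(t)² + ξ(t)² ≠ 0, y0(t)² − ξ(t)² ≠ 0 and y0(t)² + η(t)² ≠ 0. Then z1 and z2 satisfy the symmetric four-point-vortex system ż_k(t) = (i/2)·[ 1/(conj(z_k(t)) − conj(z_{3−k}(t))) − 1/(conj(z_k(t)) − z_k(t)) − 1/(conj(z_k(t)) − z_{3−k}(t)) ] for k = 1, 2 and all t ∈ ℝ, if and only if for all t ∈ ℝ: η'(t) = −ξ(t)·(y0(t)² + η(t)²)/((ξ(t)² + η(t)²)·(y0(t)² − ξ(t)²)), ξ'(t) = η(t)·(y0(t)² − ξ(t)²)/((ξ(t)² + η(t)²)·(y0(t)² + η(t)²)), x0'(t) = y0(t)·(1/(y0(t)² + η(t)²) + 1/(y0(t)² − ξ(t)²)), and y0'(t)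 = 0. -/
open ComplexConjugate

theorem vortexAux (E X Y : ℝ) (h1 : E^2+X^2≠0) (h2 : Y^2-X^2≠0) (h3 : Y^2+E^2≠0) :
    (Complex.I/2) * (1/((E:ℂ) - X*Complex.I) - 1/(-((Y:ℂ)+X)*Complex.I) - 1/((E:ℂ) - Y*Complex.I))
  - (Complex.I/2) * (1/(-((E:ℂ) - X*Complex.I)) - 1/(-((Y:ℂ)-X)*Complex.I) - 1/(-(E:ℂ) - Y*Complex.I))
  = ((-(X*(Y^2+E^2))/((X^2+E^2)*(Y^2-X^2)) : ℝ) : ℂ) + ((E*(Y^2-X^2)/((X^2+E^2)*(Y^2+E^2)) : ℝ) : ℂ)*Complex.I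
  ∧ (Complex.I/2) * (1/((E:ℂ) - X*Complex.I) - 1/(-((Y:ℂ)+X)*Complex.I) - 1/((E:ℂ) - Y*Complex.I))
  + (Complex.I/2) * (1/(-((E:ℂ) - X*Complex.I)) - 1/(-((Y:ℂ)-X)*Complex.I) - 1/(-(E:ℂ) - Y*Complex.I))
  = ((Y*(1/(Y^2+E^2)+1/(Y^2-X^2)) : ℝ) : ℂ) := by
  have c1 : (E:ℂ) - X*Complex.I ≠ 0 := by
    intro h; rw [Complex.ext_iff] at h; simp at h; simp [h.1, h.2] at h1
  have c2 : (E:ℂ) - Y*Complex.I ≠ 0 := by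
    intro h; rw [Complex.ext_iff] at h; simp at h; simp [h.1, h.2] at h3
  have c3 : -(E:ℂ) - Y*Complex.I ≠ 0 := by
    intro h; rw [Complex.ext_iff] at h; simp at h; simp [h.1, h.2] at h3
  have hyx : (Y+X : ℝ) ≠ 0 := fun hh => h2 (by linear_combination (Y-X)*hh)
  have hyx' : (Y-X : ℝ) ≠ 0 := fun hh => h2 (by linear_combination (Y+X)*hh)
  have hx1 : (X^2+E^2:ℝ) ≠ 0 := fun hh => h1 (by linear_combination hh)
  have hy1 : (E^2+Y^2:ℝ) ≠ 0 := fun hh => h3 (by linear_combination hh)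
  have cYX : ((Y:ℂ)+X) ≠ 0 := by exact_mod_cast fun hc => hyx (by exact_mod_cast hc)
  have cYX' : ((Y:ℂ)-X) ≠ 0 := by exact_mod_cast fun hc => hyx' (by exact_mod_cast hc)
  have cd4 : ((E:ℂ)^2+X^2) ≠ 0 := by
    intro h; apply h1; have : ((E^2+X^2 : ℝ) : ℂ) = 0 := by push_cast; linear_combination h
    exact_mod_cast this
  have cd5 : ((E:ℂ)^2+Y^2) ≠ 0 := by
    intro h; apply h3; have : ((Y^2+E^2 : ℝ) : ℂ) = 0 := by push_cast; linear_combination h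
    exact_mod_cast this
  have e1 : 1/((E:ℂ) - X*Complex.I) = ((E:ℂ)+X*Complex.I)/((E:ℂ)^2+X^2) := by
    rw [div_eq_div_iff c1 cd4]; linear_combination (X:ℂ)^2*Complex.I_sq
  have e2 : 1/(-((Y:ℂ)+X)*Complex.I) = Complex.I/((Y:ℂ)+X) := by
    rw [div_eq_div_iff (mul_ne_zero (neg_ne_zero.mpr cYX) Complex.I_ne_zero) cYX]
    linear_combination ((Y:ℂ)+X)*Complex.I_sq
  have e3 : 1/((E:ℂ) - Y*Complex.I) = ((E:ℂ)+Y*Complex.I)/((E:ℂ)^2+Y^2) := by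
    rw [div_eq_div_iff c2 cd5]; linear_combination (Y:ℂ)^2*Complex.I_sq
  have e4 : 1/(-((E:ℂ) - X*Complex.I)) = (-(E:ℂ)-X*Complex.I)/((E:ℂ)^2+X^2) := by
    rw [div_eq_div_iff (neg_ne_zero.mpr c1) cd4]; linear_combination (X:ℂ)^2*Complex.I_sq
  have e5 : 1/(-((Y:ℂ)-X)*Complex.I) = Complex.I/((Y:ℂ)-X) := by
    rw [div_eq_div_iff (mul_ne_zero (neg_ne_zero.mpr cYX') Complex.I_ne_zero) cYX']
    linear_combination ((Y:ℂ)-X)*Complex.I_sq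
  have e6 : 1/(-(E:ℂ) - Y*Complex.I) = (-(E:ℂ)+Y*Complex.I)/((E:ℂ)^2+Y^2) := by
    rw [div_eq_div_iff c3 cd5]; linear_combination (Y:ℂ)^2*Complex.I_sq
  have rA : -(X*(Y^2+E^2))/((X^2+E^2)*(Y^2-X^2)) = -(X/(E^2+X^2)) + 1/(Y+X)/2 - 1/(Y-X)/2 := by
    field_simp; ring
  have rB : E*(Y^2-X^2)/((X^2+E^2)*(Y^2+E^2)) = E/(E^2+X^2) - E/(E^2+Y^2) := by
    field_simp; ring
  have rC : Y*(1/(Y^2+E^2)+1/(Y^2-X^2)) = 1/(Y+X)/2 + 1/(Y-X)/2 + Y/(E^2+Y^2) := by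
    field_simp; ring
  constructor
  · rw [e1, e2, e3, e4, e5, e6, rA, rB]
    push_cast
    linear_combination ((X:ℂ)/((E:ℂ)^2+X^2) - 1/((Y:ℂ)+X)/2 + 1/((Y:ℂ)-X)/2) * Complex.I_sq
  · rw [e1, e2, e3, e4, e5, e6, rC]
    push_cast
    linear_combination (-(1/((Y:ℂ)+X)/2) - 1/((Y:ℂ)-X)/2 - (Y:ℂ)/((E:ℂ)^2+Y^2)) * Complex.I_sq

theorem vortexPairIff (u v F1 F2 : ℂ) (A B C : ℝ)
    (hDiff : F1 - F2 = (A:ℂ) + (B:ℂ)*Complex.I) (hSum : F1 + F2 = (C:ℂ)) :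
    (u = F1 ∧ v = F2) ↔
      ((u-v).re = A ∧ (u-v).im = B ∧ (u+v).re = C ∧ (u+v).im = 0) := by
  constructor
  · rintro ⟨p, q⟩
    refine ⟨?_, ?_, ?_, ?_⟩ <;> rw [p, q]
    · rw [hDiff]; simp
    · rw [hDiff]; simp
    · rw [hSum]; simp
    · rw [hSum]; simp
  · rintro ⟨q1, q2, q3, q4⟩
    have h5 : u - v = F1 - F2 := by
      rw [hDiff]; apply Complex.ext <;> simp [q1, q2]
    have h6 : u + v = F1 + F2 := by
      rw [hSum]; apply Complex.ext <;> simp [q3, q4]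
    exact ⟨by linear_combination (h5 + h6)/2, by linear_combination (h6 - h5)/2⟩

/-- Equivalence between the symmetric four-point-vortex system on `z1, z2` and the
reduced real system on `(η, ξ, x0, y0)`. -/
theorem stmt_0 (z1 z2 : ℝ → ℂ) (hz1 : Differentiable ℝ z1) (hz2 : Differentiable ℝ z2)
    (x0 y0 η ξ : ℝ → ℝ)
    (hx0 : ∀ t, x0 t = (z1 t + z2 t).re) (hy0 : ∀ t, y0 t = (z1 t + z2 t).im)
    (hηdef : ∀ t, η t = (z1 t - z2 t).re) (hξdef : ∀ t, ξ t = (z1 t - z2 t).im)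
    (hd1 : ∀ t, η t ^ 2 + ξ t ^ 2 ≠ 0)
    (hd2 : ∀ t, y0 t ^ 2 - ξ t ^ 2 ≠ 0)
    (hd3 : ∀ t, y0 t ^ 2 + η t ^ 2 ≠ 0) :
    (∀ t : ℝ,
      deriv z1 t = (Complex.I / 2) *
        (1 / (conj (z1 t) - conj (z2 t)) - 1 / (conj (z1 t) - z1 t)
          - 1 / (conj (z1 t) - z2 t)) ∧
      deriv z2 t = (Complex.I / 2) *
        (1 / (conj (z2 t) - conj (z1 t)) - 1 / (conj (z2 t) - z2 t)
          - 1 / (conj (z2 t) - z1 t)))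
    ↔ (∀ t : ℝ,
      deriv η t = -(ξ t * (y0 t ^ 2 + η t ^ 2)) /
          ((ξ t ^ 2 + η t ^ 2) * (y0 t ^ 2 - ξ t ^ 2)) ∧
      deriv ξ t = η t * (y0 t ^ 2 - ξ t ^ 2) /
          ((ξ t ^ 2 + η t ^ 2) * (y0 t ^ 2 + η t ^ 2)) ∧
      deriv x0 t = y0 t * (1 / (y0 t ^ 2 + η t ^ 2) + 1 / (y0 t ^ 2 - ξ t ^ 2)) ∧
      deriv y0 t = 0) := by
  refine forall_congr' fun t => ?_
  -- structural identities
  have A1 : conj (z1 t) - conj (z2 t) = (η t:ℂ) - (ξ t:ℂ)*Complex.I := by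
    apply Complex.ext <;> simp [hηdef, hξdef] <;> ring
  have A2 : conj (z1 t) - z1 t = -((y0 t:ℂ) + (ξ t:ℂ))*Complex.I := by
    apply Complex.ext <;> simp [hy0, hξdef] <;> ring
  have A3 : conj (z1 t) - z2 t = (η t:ℂ) - (y0 t:ℂ)*Complex.I := by
    apply Complex.ext <;> simp [hηdef, hy0] <;> ring
  have A4 : conj (z2 t) - conj (z1 t) = -((η t:ℂ) - (ξ t:ℂ)*Complex.I) := by
    apply Complex.ext <;> simp [hηdef, hξdef] <;> ring
  have A5 : conj (z2 t) - z2 t = -((y0 t:ℂ) - (ξ t:ℂ))*Complex.I := by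
    apply Complex.ext <;> simp [hy0, hξdef] <;> ring
  have A6 : conj (z2 t) - z1 t = -(η t:ℂ) - (y0 t:ℂ)*Complex.I := by
    apply Complex.ext <;> simp [hηdef, hy0] <;> ring
  -- derivative facts
  have hsub : HasDerivAt (fun s => z1 s - z2 s) (deriv z1 t - deriv z2 t) t :=
    ((hz1 t).hasDerivAt.sub (hz2 t).hasDerivAt)
  have hadd : HasDerivAt (fun s => z1 s + z2 s) (deriv z1 t + deriv z2 t) t :=
    ((hz1 t).hasDerivAt.add (hz2 t).hasDerivAt)
  have dη : deriv η t = (deriv z1 t - deriv z2 t).re := by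
    rw [funext hηdef]
    exact (Complex.reCLM.hasFDerivAt.comp_hasDerivAt t hsub).deriv
  have dξ : deriv ξ t = (deriv z1 t - deriv z2 t).im := by
    rw [funext hξdef]
    exact (Complex.imCLM.hasFDerivAt.comp_hasDerivAt t hsub).deriv
  have dx : deriv x0 t = (deriv z1 t + deriv z2 t).re := by
    rw [funext hx0]
    exact (Complex.reCLM.hasFDerivAt.comp_hasDerivAt t hadd).deriv
  have dy : deriv y0 t = (deriv z1 t + deriv z2 t).im := by
    rw [funext hy0]
    exact (Complex.imCLM.hasFDerivAt.comp_hasDerivAt t hadd).deriv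
  obtain ⟨hDiff, hSum⟩ := vortexAux (η t) (ξ t) (y0 t) (hd1 t) (hd2 t) (hd3 t)
  rw [A1, A2, A3, A4, A5, A6, dη, dξ, dx, dy]
  exact vortexPairIff _ _ _ _ _ _ _ hDiff hSum
end

section
/- Fix y0 > 0 and let η, ξ : ℝ → ℝ be differentiable with, for all t ∈ ℝ, ξ(t)² + η(t)² ≠ 0 and y0² − ξ(t)² > 0, satisfying system (S), and with η(0) = 0 and ξ(0) = ξ0 for some 0 < ξ0 < y0. Then ξ(t)² ≤ ξ0² for all t ∈ ℝ. Consequently, if moreover ξ0² < y0²/2, then y0²/2 ≤ y0² − ξ(t)² ≤ y0² for all t ∈ ℝ. -/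
/-- A priori bounds `ξ(t)² ≤ ξ0²` and `y0²/2 ≤ y0² − ξ(t)² ≤ y0²` along solutions of
the reduced point-vortex system (S). -/
theorem stmt_2 (y0 ξ0 : ℝ) (hy0 : 0 < y0) (hξ0 : 0 < ξ0) (hξ0y : ξ0 < y0)
    (η ξ : ℝ → ℝ) (hη : Differentiable ℝ η) (hξ : Differentiable ℝ ξ)
    (hd1 : ∀ t, ξ t ^ 2 + η t ^ 2 ≠ 0) (hd2 : ∀ t, 0 < y0 ^ 2 - ξ t ^ 2)
    (hS : ∀ t : ℝ,
      deriv η t = -(ξ t * (y0 ^ 2 + η t ^ 2)) /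
          ((ξ t ^ 2 + η t ^ 2) * (y0 ^ 2 - ξ t ^ 2)) ∧
      deriv ξ t = η t * (y0 ^ 2 - ξ t ^ 2) /
          ((ξ t ^ 2 + η t ^ 2) * (y0 ^ 2 + η t ^ 2)))
    (hη0 : η 0 = 0) (hξinit : ξ 0 = ξ0) :
    (∀ t : ℝ, ξ t ^ 2 ≤ ξ0 ^ 2) ∧
    (ξ0 ^ 2 < y0 ^ 2 / 2 →
      ∀ t : ℝ, y0 ^ 2 / 2 ≤ y0 ^ 2 - ξ t ^ 2 ∧ y0 ^ 2 - ξ t ^ 2 ≤ y0 ^ 2) := by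
  have hy2 : (0:ℝ) < y0 ^ 2 := by positivity
  have hg : ∀ t, (0:ℝ) < y0 ^ 2 + η t ^ 2 := fun t => by positivity
  set F : ℝ → ℝ := fun t => (y0 ^ 2 - ξ t ^ 2)⁻¹ - (y0 ^ 2 + η t ^ 2)⁻¹ with hF
  have hFd : ∀ t, HasDerivAt F 0 t := by
    intro t
    have hξt : HasDerivAt ξ (deriv ξ t) t := (hξ t).hasDerivAt
    have hηt : HasDerivAt η (deriv η t) t := (hη t).hasDerivAt
    have h1 : HasDerivAt (fun s => y0 ^ 2 - ξ s ^ 2)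
        (0 - 2 * ξ t ^ 1 * deriv ξ t) t :=
      (hasDerivAt_const t (y0 ^ 2)).sub (hξt.pow 2)
    have h2 : HasDerivAt (fun s => y0 ^ 2 + η s ^ 2)
        (0 + 2 * η t ^ 1 * deriv η t) t :=
      (hasDerivAt_const t (y0 ^ 2)).add (hηt.pow 2)
    have h1' := h1.inv (hd2 t).ne'
    have h2' := h2.inv (hg t).ne'
    have h3 := h1'.sub h2'
    have hD : -(0 - 2 * ξ t ^ 1 * deriv ξ t) / (y0 ^ 2 - ξ t ^ 2) ^ 2 -
        -(0 + 2 * η t ^ 1 * deriv η t) / (y0 ^ 2 + η t ^ 2) ^ 2 = 0 := by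
      have hne1 := hd1 t
      have hne2 := (hd2 t).ne'
      have hne3 := (hg t).ne'
      rw [(hS t).1, (hS t).2]
      field_simp
      ring
    rw [hD] at h3
    exact h3
  have hconst : ∀ t, F t = F 0 := by
    intro t
    exact is_const_of_deriv_eq_zero (fun s => (hFd s).differentiableAt)
      (fun s => (hFd s).deriv) t 0
  have hξ0y2 : (0:ℝ) < y0 ^ 2 - ξ0 ^ 2 := by nlinarith
  have key : ∀ t, ξ t ^ 2 ≤ ξ0 ^ 2 := by
    intro t
    have h := hconst t
    simp only [hF, hη0, hξinit] at h
    -- h : (y0^2 - ξ t^2)⁻¹ - (y0^2 + η t^2)⁻¹ = (y0^2 - ξ0^2)⁻¹ - (y0^2 + 0^2)⁻¹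
    have hle : (y0 ^ 2 + η t ^ 2)⁻¹ ≤ (y0 ^ 2)⁻¹ := by
      apply inv_anti₀ hy2
      nlinarith [sq_nonneg (η t)]
    have h2 : (y0 ^ 2 - ξ t ^ 2)⁻¹ ≤ (y0 ^ 2 - ξ0 ^ 2)⁻¹ := by
      have : (y0 ^ 2 + (0:ℝ) ^ 2)⁻¹ = (y0 ^ 2)⁻¹ := by norm_num
      nlinarith [hle, h]
    have := (inv_le_inv₀ (hd2 t) hξ0y2).mp h2
    linarith
  refine ⟨key, fun hhalf t => ⟨by nlinarith [key t], by nlinarith [sq_nonneg (ξ t)]⟩⟩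
end

section
/- For every fixed s ∈ (0, 1), the map α ↦ K(α, s²) is strictly increasing on the interval (0, 1/2). -/
/-- The kernel appearing in the period integral of the leapfrogging orbits. -/
noncomputable def K (α s : ℝ) : ℝ :=
  (1 - α) * (1 - 2 * α + α * s) ^ 2 /
    ((1 - 2 * α) * (1 - 2 * α + α ^ 2 * s) ^ ((3 : ℝ) / 2))

lemma keyE (a t : ℝ) (h1 : 0 < a) (h2 : a < 1/2) (h3 : 0 < t) (h4 : t < 1) :
    0 < (1-2*a+a*t)*(1-2*a+a^2*t) +
      (1-a)*(1-2*a)*(3*(1-a*t)*(1-2*a+a*t) - 2*(2-t)*(1-2*a+a^2*t)) := by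
  have hA : (0:ℝ) ≤ (1 - 2*a) * (2 - 5*a + 7*a^2 - 2*a^3) := by
    nlinarith [sq_nonneg a, sq_nonneg (1-2*a)]
  have hAB : (0:ℝ) ≤ 2 - 9*a + 16*a^2 - 12*a^3 + 2*a^4 := by
    nlinarith [sq_nonneg (a - 3/7), sq_nonneg a, mul_pos h1 h1]
  nlinarith [mul_nonneg (mul_nonneg h3.le (by linarith : (0:ℝ) ≤ 1 - t)) hA,
    mul_nonneg (sq_nonneg t) hAB,
    mul_pos h1 (mul_pos (by linarith : (0:ℝ) < 1-2*a) (by linarith : (0:ℝ) < 1-2*a))]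

lemma K_hasDeriv (t α : ℝ) (ht0 : 0 < t) (ht1 : t < 1) (hα0 : 0 < α) (hα1 : α < 1/2) :
    ∃ d, HasDerivAt (fun x => K x t) d α ∧ 0 < d := by
  have h12 : (0:ℝ) < 1 - 2*α := by linarith
  have hu : (0:ℝ) < 1 - 2*α + α*t := by nlinarith
  have hv : (0:ℝ) < 1 - 2*α + α^2*t := by nlinarith
  have hud : HasDerivAt (fun x : ℝ => 1 - 2*x + x*t) (0 - 2*1 + 1*t) α :=
    ((hasDerivAt_const α (1:ℝ)).sub ((hasDerivAt_id α).const_mul 2)).add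
      ((hasDerivAt_id α).mul_const t)
  have hvd : HasDerivAt (fun x : ℝ => 1 - 2*x + x^2*t) (0 - 2*1 + (↑2 * α^(2-1)) * t) α :=
    ((hasDerivAt_const α (1:ℝ)).sub ((hasDerivAt_id α).const_mul 2)).add
      ((hasDerivAt_pow 2 α).mul_const t)
  have hN : HasDerivAt (fun x : ℝ => (1 - x) * (1 - 2*x + x*t)^2)
      ((0 - 1) * (1 - 2*α + α*t)^2 +
        (1 - α) * (↑2 * (1 - 2*α + α*t)^(2-1) * (0 - 2*1 + 1*t))) α :=
    ((hasDerivAt_const α (1:ℝ)).sub (hasDerivAt_id α)).mul (hud.pow 2)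
  have hg : HasDerivAt (fun x : ℝ => (1 - 2*x + x^2*t) ^ ((3:ℝ)/2))
      ((0 - 2*1 + (↑2 * α^(2-1)) * t) * ((3:ℝ)/2) * (1 - 2*α + α^2*t) ^ ((3:ℝ)/2 - 1)) α :=
    hvd.rpow_const (Or.inr (by norm_num))
  have hD : HasDerivAt (fun x : ℝ => (1 - 2*x) * (1 - 2*x + x^2*t) ^ ((3:ℝ)/2))
      ((0 - 2*1) * ((1 - 2*α + α^2*t) ^ ((3:ℝ)/2)) +
        (1 - 2*α) * ((0 - 2*1 + (↑2 * α^(2-1)) * t) * ((3:ℝ)/2) *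
          (1 - 2*α + α^2*t) ^ ((3:ℝ)/2 - 1))) α :=
    ((hasDerivAt_const α (1:ℝ)).sub ((hasDerivAt_id α).const_mul 2)).mul hg
  have hDne : (1 - 2*α) * (1 - 2*α + α^2*t) ^ ((3:ℝ)/2) ≠ 0 :=
    ne_of_gt (mul_pos h12 (Real.rpow_pos_of_pos hv _))
  have hK := hN.div hD hDne
  refine ⟨_, hK.congr_of_eventuallyEq (by filter_upwards with x; simp [K]), ?_⟩
  set w := (1 - 2*α + α^2*t) ^ ((1:ℝ)/2) with hwdef
  have hw : 0 < w := Real.rpow_pos_of_pos hv _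
  have h32 : (1 - 2*α + α^2*t) ^ ((3:ℝ)/2) = (1 - 2*α + α^2*t) * w := by
    rw [hwdef, show (3:ℝ)/2 = 1 + 1/2 by norm_num, Real.rpow_add hv, Real.rpow_one]
  have h12' : (1 - 2*α + α^2*t) ^ ((3:ℝ)/2 - 1) = w := by rw [hwdef]; norm_num
  rw [h32, h12']
  apply div_pos
  · have hE := keyE α t hα0 hα1 ht0 ht1
    have heq : ((0 - 1) * (1 - 2*α + α*t)^2 +
        (1 - α) * (↑2 * (1 - 2*α + α*t)^(2-1) * (0 - 2*1 + 1*t))) *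
        ((1 - 2*α) * ((1 - 2*α + α^2*t) * w)) -
        (1 - α) * (1 - 2*α + α*t)^2 *
        ((0 - 2*1) * ((1 - 2*α + α^2*t) * w) +
          (1 - 2*α) * ((0 - 2*1 + (↑2 * α^(2-1)) * t) * ((3:ℝ)/2) * w)) =
        w * ((1 - 2*α + α*t) * ((1-2*α+α*t)*(1-2*α+α^2*t) +
          (1-α)*(1-2*α)*(3*(1-α*t)*(1-2*α+α*t) - 2*(2-t)*(1-2*α+α^2*t)))) := by
      push_cast; ring
    rw [heq]
    exact mul_pos hw (mul_pos hu hE)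
  · positivity

/-- For fixed `s ∈ (0,1)`, the map `α ↦ K(α, s²)` is strictly increasing on `(0, 1/2)`. -/
theorem stmt_5 (s : ℝ) (hs : s ∈ Set.Ioo (0 : ℝ) 1) :
    StrictMonoOn (fun α => K α (s ^ 2)) (Set.Ioo (0 : ℝ) (1 / 2)) := by
  obtain ⟨hs0, hs1⟩ := hs
  have ht0 : 0 < s^2 := by positivity
  have ht1 : s^2 < 1 := by nlinarith
  apply strictMonoOn_of_deriv_pos (convex_Ioo 0 (1/2))
  · intro x hx
    exact ((K_hasDeriv (s^2) x ht0 ht1 hx.1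
      hx.2).choose_spec.1).differentiableAt.continuousAt.continuousWithinAt
  · intro x hx
    rw [interior_Ioo] at hx
    obtain ⟨d, hd, hdpos⟩ := K_hasDeriv (s^2) x ht0 ht1 hx.1 hx.2
    rw [hd.deriv]; exact hdpos
end

section
/- For every fixed α ∈ (0, 1/2), the map s ↦ K(α, s) is strictly increasing on [0, 1]. Moreover, for all α ∈ (0, 1/2) and all s ∈ [0, 1], one has 1 ≤ K(α, s²) ≤ 1/(1 − 2α). -/
lemma K_hasDerivAt (α : ℝ) (hα0 : 0 < α) (hα2 : α < 1 / 2) (s : ℝ) (hs : 0 ≤ s) :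
    HasDerivAt (K α)
      ((1 - α) * (1 - 2 * α) * α * (1 - 2 * α + α ^ 2 * s) ^ ((1 : ℝ) / 2) *
        ((1 - 2 * α + α * s) *
          (2 * (1 - 2 * α + α ^ 2 * s) - 3 / 2 * α * (1 - 2 * α + α * s))) /
        ((1 - 2 * α) * (1 - 2 * α + α ^ 2 * s) ^ ((3 : ℝ) / 2)) ^ 2) s := by
  have ha : 0 < 1 - 2 * α := by linarith
  have hbs : 0 < 1 - 2 * α + α ^ 2 * s := by nlinarith
  have h1 : HasDerivAt (fun t : ℝ => 1 - 2 * α + α * t) α s := by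
    simpa using ((hasDerivAt_id s).const_mul α).const_add (1 - 2 * α)
  have h2 : HasDerivAt (fun t : ℝ => 1 - 2 * α + α ^ 2 * t) (α ^ 2) s := by
    simpa using ((hasDerivAt_id s).const_mul (α ^ 2)).const_add (1 - 2 * α)
  have hN : HasDerivAt (fun t : ℝ => (1 - α) * (1 - 2 * α + α * t) ^ 2)
      ((1 - α) * ((2 : ℕ) * (1 - 2 * α + α * s) ^ 1 * α)) s := (h1.pow 2).const_mul (1 - α)
  have hR : HasDerivAt (fun t : ℝ => (1 - 2 * α + α ^ 2 * t) ^ ((3 : ℝ) / 2))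
      (α ^ 2 * ((3 : ℝ) / 2) * (1 - 2 * α + α ^ 2 * s) ^ ((3 : ℝ) / 2 - 1)) s :=
    h2.rpow_const (Or.inl hbs.ne')
  have hD : HasDerivAt (fun t : ℝ => (1 - 2 * α) * (1 - 2 * α + α ^ 2 * t) ^ ((3 : ℝ) / 2))
      ((1 - 2 * α) * (α ^ 2 * ((3 : ℝ) / 2) * (1 - 2 * α + α ^ 2 * s) ^ ((3 : ℝ) / 2 - 1))) s :=
    hR.const_mul _
  have hDne : (1 - 2 * α) * (1 - 2 * α + α ^ 2 * s) ^ ((3 : ℝ) / 2) ≠ 0 :=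
    (mul_pos ha (Real.rpow_pos_of_pos hbs _)).ne'
  have hK := hN.div hD hDne
  have hKfun : HasDerivAt (K α) _ s := hK
  convert hKfun using 1
  have h32 : (3 : ℝ) / 2 - 1 = 1 / 2 := by norm_num
  have hsplit : (1 - 2 * α + α ^ 2 * s) ^ ((3 : ℝ) / 2) =
      (1 - 2 * α + α ^ 2 * s) ^ ((1 : ℝ) / 2) * (1 - 2 * α + α ^ 2 * s) := by
    rw [show (3 : ℝ) / 2 = 1 / 2 + 1 by norm_num, Real.rpow_add hbs, Real.rpow_one]
  rw [h32]
  rw [hsplit]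
  push_cast
  ring

/-- For fixed `α ∈ (0,1/2)`, the map `s ↦ K(α, s)` is strictly increasing on `[0,1]`;
moreover `1 ≤ K(α, s²) ≤ 1/(1 − 2α)` for `s ∈ [0,1]`. -/
theorem stmt_6 (α : ℝ) (hα : α ∈ Set.Ioo (0 : ℝ) (1 / 2)) :
    StrictMonoOn (K α) (Set.Icc (0 : ℝ) 1) ∧
    ∀ s ∈ Set.Icc (0 : ℝ) 1, 1 ≤ K α (s ^ 2) ∧ K α (s ^ 2) ≤ 1 / (1 - 2 * α) := by
  obtain ⟨hα0, hα2⟩ := hα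
  have ha : 0 < 1 - 2 * α := by linarith
  have h1α : 0 < 1 - α := by linarith
  have hmono : StrictMonoOn (K α) (Set.Icc (0 : ℝ) 1) := by
    apply strictMonoOn_of_deriv_pos (convex_Icc 0 1)
    · intro s hs
      exact (K_hasDerivAt α hα0 hα2 s hs.1).continuousAt.continuousWithinAt
    · intro s hs
      rw [interior_Icc] at hs
      have hs0 : (0 : ℝ) ≤ s := hs.1.le
      rw [(K_hasDerivAt α hα0 hα2 s hs0).deriv]
      have hbs : 0 < 1 - 2 * α + α ^ 2 * s := by nlinarith
      have hus : 0 < 1 - 2 * α + α * s := by nlinarith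
      apply div_pos
      · apply mul_pos
        · apply mul_pos (mul_pos (mul_pos h1α ha) hα0)
          exact Real.rpow_pos_of_pos hbs _
        · apply mul_pos hus
          nlinarith
      · exact pow_pos (mul_pos ha (Real.rpow_pos_of_pos hbs _)) 2
  refine ⟨hmono, fun s hs => ?_⟩
  obtain ⟨hs0, hs1⟩ := hs
  have hs2 : s ^ 2 ∈ Set.Icc (0 : ℝ) 1 := ⟨sq_nonneg s, by nlinarith⟩
  have h0m : (0 : ℝ) ∈ Set.Icc (0 : ℝ) 1 := ⟨le_refl 0, by norm_num⟩
  have h1m : (1 : ℝ) ∈ Set.Icc (0 : ℝ) 1 := ⟨by norm_num, le_refl 1⟩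
  have hK0 : 1 ≤ K α 0 := by
    unfold K
    rw [mul_zero, add_zero, mul_zero, add_zero]
    rw [le_div_iff₀ (mul_pos ha (Real.rpow_pos_of_pos ha _))]
    have hsqrt : Real.sqrt (1 - 2 * α) ≤ 1 - α := by
      calc Real.sqrt (1 - 2 * α) ≤ Real.sqrt ((1 - α) ^ 2) :=
            Real.sqrt_le_sqrt (by nlinarith)
        _ = 1 - α := Real.sqrt_sq h1α.le
    have hsplit : (1 - 2 * α) ^ ((3 : ℝ) / 2) =
        Real.sqrt (1 - 2 * α) * (1 - 2 * α) := by
      rw [show (3 : ℝ) / 2 = 1 / 2 + 1 by norm_num, Real.rpow_add ha, Real.rpow_one,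
        Real.sqrt_eq_rpow]
    rw [hsplit]
    nlinarith [Real.sqrt_nonneg (1 - 2 * α)]
  have hK1 : K α 1 = 1 / (1 - 2 * α) := by
    unfold K
    rw [mul_one, mul_one]
    have e1 : 1 - 2 * α + α ^ 2 = (1 - α) ^ 2 := by ring
    have e2 : ((1 - α) ^ 2 : ℝ) ^ ((3 : ℝ) / 2) = (1 - α) ^ 3 := by
      rw [← Real.rpow_natCast (1 - α) 2, ← Real.rpow_mul h1α.le,
        show ((2 : ℕ) : ℝ) * ((3 : ℝ) / 2) = ((3 : ℕ) : ℝ) by norm_num,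
        Real.rpow_natCast]
    rw [e1, e2, show 1 - 2 * α + α = 1 - α by ring]
    field_simp
  constructor
  · calc (1 : ℝ) ≤ K α 0 := hK0
      _ ≤ K α (s ^ 2) := hmono.monotoneOn h0m hs2 hs2.1
  · calc K α (s ^ 2) ≤ K α 1 := hmono.monotoneOn hs2 h1m hs2.2
      _ = 1 / (1 - 2 * α) := hK1
end

section
/- Fix y0 > 0. The function ξ0 ↦ T(ξ0) is real-analytic on the open interval (0, y0/√2); moreover T(ξ0) > 0 for all ξ0 in this interval, and consequently the frequency ξ0 ↦ ω(ξ0) = 2π/T(ξ0) is also real-analytic on (0, y0/√2). -/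
/-- The period of the leapfrogging point-vortex orbit. -/
noncomputable def T (y0 ξ0 : ℝ) : ℝ :=
  4 * ξ0 ^ 2 * ∫ s in (0 : ℝ)..1, K (ξ0 ^ 2 / y0 ^ 2) (s ^ 2) / Real.sqrt (1 - s ^ 2)

open Complex MeasureTheory Set Metric
open scoped Interval


noncomputable def Kc (z : ℂ) (s : ℝ) : ℂ :=
  (1 - z) * (1 - 2 * z + z * s) ^ 2 /
    ((1 - 2 * z) * (1 - 2 * z + z ^ 2 * s) ^ ((3 : ℂ) / 2))

noncomputable def Kc' (z : ℂ) (s : ℝ) : ℂ :=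
  (((0 - 1) * (1 - 2 * z + z * s) ^ 2 +
      (1 - z) * ((2 : ℂ) * (1 - 2 * z + z * s) ^ 1 * ((s : ℂ) - 2))) *
      ((1 - 2 * z) * (1 - 2 * z + z ^ 2 * s) ^ ((3 : ℂ) / 2)) -
    (1 - z) * (1 - 2 * z + z * s) ^ 2 *
      ((-2) * (1 - 2 * z + z ^ 2 * s) ^ ((3 : ℂ) / 2) +
        (1 - 2 * z) *
          ((3 : ℂ) / 2 * (1 - 2 * z + z ^ 2 * s) ^ ((3 : ℂ) / 2 - 1) * (2 * z * s - 2)))) /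
    ((1 - 2 * z) * (1 - 2 * z + z ^ 2 * s) ^ ((3 : ℂ) / 2)) ^ 2

def U : Set ℂ := {z | 0 < z.re ∧ z.re < 1 / 2 ∧ z.im ^ 2 < 1 - 2 * z.re}

lemma isOpen_U : IsOpen U := by
  have h1 : IsOpen {z : ℂ | 0 < z.re} := isOpen_lt continuous_const Complex.continuous_re
  have h2 : IsOpen {z : ℂ | z.re < 1 / 2} := isOpen_lt Complex.continuous_re continuous_const
  have h3 : IsOpen {z : ℂ | z.im ^ 2 < 1 - 2 * z.re} :=
    isOpen_lt (by fun_prop) (by fun_prop)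
  exact h1.inter (h2.inter h3)

lemma B_re_pos {z : ℂ} (hz : z ∈ U) {s : ℝ} (hs : s ∈ Icc (0:ℝ) 1) :
    0 < ((1 : ℂ) - 2 * z + z ^ 2 * (s : ℂ)).re := by
  obtain ⟨h1, h2, h3⟩ := hz
  have hre : ((1 : ℂ) - 2 * z + z ^ 2 * (s : ℂ)).re
      = 1 - 2 * z.re + (z.re ^ 2 - z.im ^ 2) * s := by
    simp [Complex.add_re, Complex.sub_re, Complex.mul_re, Complex.ofReal_re,
      Complex.ofReal_im, pow_two]
    try ring
  rw [hre]
  obtain ⟨hs0, hs1⟩ := hs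
  nlinarith [sq_nonneg z.re, sq_nonneg z.im]

lemma B_mem_slitPlane {z : ℂ} (hz : z ∈ U) {s : ℝ} (hs : s ∈ Icc (0:ℝ) 1) :
    ((1 : ℂ) - 2 * z + z ^ 2 * (s : ℂ)) ∈ Complex.slitPlane :=
  Or.inl (B_re_pos hz hs)

lemma B_ne_zero {z : ℂ} (hz : z ∈ U) {s : ℝ} (hs : s ∈ Icc (0:ℝ) 1) :
    ((1 : ℂ) - 2 * z + z ^ 2 * (s : ℝ)) ≠ 0 := by
  intro h
  have := B_re_pos hz hs
  rw [h] at this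
  simp at this

lemma one_sub_two_z_ne_zero {z : ℂ} (hz : z ∈ U) : (1 : ℂ) - 2 * z ≠ 0 := by
  intro h
  have h2 := hz.2.1
  have : ((1 : ℂ) - 2 * z).re = 1 - 2 * z.re := by simp
  rw [h] at this
  simp at this
  linarith

lemma Q_ne_zero {z : ℂ} (hz : z ∈ U) {s : ℝ} (hs : s ∈ Icc (0:ℝ) 1) :
    ((1 : ℂ) - 2 * z) * ((1 : ℂ) - 2 * z + z ^ 2 * (s : ℂ)) ^ ((3 : ℂ) / 2) ≠ 0 :=
  mul_ne_zero (one_sub_two_z_ne_zero hz)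
    (by simp [Complex.cpow_eq_zero_iff, B_ne_zero hz hs])

lemma hasDerivAt_Kc {z : ℂ} (hz : z ∈ U) {s : ℝ} (hs : s ∈ Icc (0:ℝ) 1) :
    HasDerivAt (fun w => Kc w s) (Kc' z s) z := by
  have hA : HasDerivAt (fun w : ℂ => 1 - 2 * w + w * (s : ℂ)) ((s : ℂ) - 2) z := by
    have : HasDerivAt (fun w : ℂ => 1 - 2 * w + w * (s : ℂ)) (0 - 2 * 1 + 1 * (s : ℂ)) z :=
      (((hasDerivAt_const z (1:ℂ)).sub ((hasDerivAt_id z).const_mul 2)).add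
      ((hasDerivAt_id z).mul_const (s : ℂ)))
    convert this using 1; ring
  have hB : HasDerivAt (fun w : ℂ => 1 - 2 * w + w ^ 2 * (s : ℂ)) (2 * z * (s : ℂ) - 2) z := by
    have : HasDerivAt (fun w : ℂ => 1 - 2 * w + w ^ 2 * (s : ℂ))
        (0 - 2 * 1 + (↑2 * z ^ (2 - 1)) * (s : ℂ)) z :=
      (((hasDerivAt_const z (1:ℂ)).sub ((hasDerivAt_id z).const_mul 2)).add
      ((hasDerivAt_pow 2 z).mul_const (s : ℂ)))
    convert this using 1; ring
  have hP : HasDerivAt (fun w : ℂ => (1 - w) * (1 - 2 * w + w * (s : ℂ)) ^ 2)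
      ((0 - 1) * (1 - 2 * z + z * s) ^ 2 +
        (1 - z) * ((2 : ℂ) * (1 - 2 * z + z * s) ^ 1 * ((s : ℂ) - 2))) z := by
    exact ((hasDerivAt_const z (1:ℂ)).sub (hasDerivAt_id z)).mul (by simpa using hA.fun_pow 2)
  have hQ : HasDerivAt (fun w : ℂ => (1 - 2 * w) * (1 - 2 * w + w ^ 2 * (s : ℂ)) ^ ((3:ℂ)/2))
      ((-2) * (1 - 2 * z + z ^ 2 * s) ^ ((3 : ℂ) / 2) +
        (1 - 2 * z) *
          ((3 : ℂ) / 2 * (1 - 2 * z + z ^ 2 * s) ^ ((3 : ℂ) / 2 - 1) * (2 * z * s - 2))) z := by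
    have h1 : HasDerivAt (fun w : ℂ => 1 - 2 * w) (-2 : ℂ) z := by
      have : HasDerivAt (fun w : ℂ => 1 - 2 * w) (0 - 2 * 1) z :=
        (hasDerivAt_const z (1:ℂ)).sub ((hasDerivAt_id z).const_mul 2)
      convert this using 1; ring
    exact h1.mul (hB.cpow_const (B_mem_slitPlane hz hs))
  exact hP.div hQ (Q_ne_zero hz hs)

lemma continuousOn_Kc : ContinuousOn (fun p : ℂ × ℝ => Kc p.1 p.2) (U ×ˢ Icc (0:ℝ) 1) := by
  rintro p ⟨hz, hs⟩
  apply ContinuousAt.continuousWithinAt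
  have hB : ContinuousAt (fun p : ℂ × ℝ => (1:ℂ) - 2*p.1 + p.1^2*(p.2:ℂ)) p := by fun_prop
  have h32 : ContinuousAt
      (fun p : ℂ × ℝ => ((1:ℂ) - 2*p.1 + p.1^2*(p.2:ℂ)) ^ ((3:ℂ)/2)) p :=
    hB.cpow continuousAt_const (B_mem_slitPlane hz hs)
  have hQ : ContinuousAt (fun p : ℂ × ℝ =>
      ((1:ℂ) - 2*p.1) * ((1:ℂ) - 2*p.1 + p.1^2*(p.2:ℂ)) ^ ((3:ℂ)/2)) p :=
    (by fun_prop : ContinuousAt (fun p : ℂ × ℝ => (1:ℂ) - 2*p.1) p).mul h32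
  exact (by fun_prop : ContinuousAt
      (fun p : ℂ × ℝ => ((1:ℂ) - p.1) * ((1:ℂ) - 2*p.1 + p.1*(p.2:ℂ))^2) p).div hQ
    (Q_ne_zero hz hs)

lemma continuousOn_Kc' : ContinuousOn (fun p : ℂ × ℝ => Kc' p.1 p.2) (U ×ˢ Icc (0:ℝ) 1) := by
  rintro p ⟨hz, hs⟩
  apply ContinuousAt.continuousWithinAt
  have hB : ContinuousAt (fun p : ℂ × ℝ => (1:ℂ) - 2*p.1 + p.1^2*(p.2:ℂ)) p := by fun_prop
  have h32 : ContinuousAt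
      (fun p : ℂ × ℝ => ((1:ℂ) - 2*p.1 + p.1^2*(p.2:ℂ)) ^ ((3:ℂ)/2)) p :=
    hB.cpow continuousAt_const (B_mem_slitPlane hz hs)
  have h12 : ContinuousAt
      (fun p : ℂ × ℝ => ((1:ℂ) - 2*p.1 + p.1^2*(p.2:ℂ)) ^ ((3:ℂ)/2 - 1)) p :=
    hB.cpow continuousAt_const (B_mem_slitPlane hz hs)
  have hQ : ContinuousAt (fun p : ℂ × ℝ =>
      ((1:ℂ) - 2*p.1) * ((1:ℂ) - 2*p.1 + p.1^2*(p.2:ℂ)) ^ ((3:ℂ)/2)) p :=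
    (by fun_prop : ContinuousAt (fun p : ℂ × ℝ => (1:ℂ) - 2*p.1) p).mul h32
  have hP : ContinuousAt (fun p : ℂ × ℝ =>
      ((0:ℂ) - 1) * ((1:ℂ) - 2*p.1 + p.1*(p.2:ℂ))^2 +
        ((1:ℂ) - p.1) * ((2:ℂ) * ((1:ℂ) - 2*p.1 + p.1*(p.2:ℂ))^1 * ((p.2:ℂ) - 2))) p := by
    fun_prop
  have hR : ContinuousAt (fun p : ℂ × ℝ =>
      (-2 : ℂ) * ((1:ℂ) - 2*p.1 + p.1^2*(p.2:ℂ)) ^ ((3:ℂ)/2) +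
        ((1:ℂ) - 2*p.1) *
          ((3:ℂ)/2 * ((1:ℂ) - 2*p.1 + p.1^2*(p.2:ℂ)) ^ ((3:ℂ)/2 - 1) *
            (2*p.1*(p.2:ℂ) - 2))) p :=
    (continuousAt_const.mul h32).add
      ((by fun_prop : ContinuousAt (fun p : ℂ × ℝ => (1:ℂ) - 2*p.1) p).mul
        ((continuousAt_const.mul h12).mul
          (by fun_prop : ContinuousAt (fun p : ℂ × ℝ => 2*p.1*(p.2:ℂ) - 2) p)))
  have hN := (hP.mul hQ).sub
    ((by fun_prop : ContinuousAt
        (fun p : ℂ × ℝ => ((1:ℂ) - p.1) * ((1:ℂ) - 2*p.1 + p.1*(p.2:ℂ))^2) p).mul hR)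
  exact hN.div (hQ.pow 2) (pow_ne_zero _ (Q_ne_zero hz hs))

lemma intervalIntegrable_inv_sqrt :
    IntervalIntegrable (fun s : ℝ => (Real.sqrt (1 - s ^ 2))⁻¹) volume 0 1 := by
  have h1 : IntervalIntegrable (fun x : ℝ => x ^ (-(1/2) : ℝ)) volume 0 1 :=
    intervalIntegral.intervalIntegrable_rpow' (by norm_num)
  have h2 : IntervalIntegrable (fun x : ℝ => (1 - x) ^ (-(1/2) : ℝ)) volume 0 1 := by
    simpa using (h1.comp_sub_left 1).symm
  apply h2.mono_fun' ?_ ?_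
  · exact ((Real.continuous_sqrt.comp
      (by fun_prop : Continuous fun s : ℝ => 1 - s ^ 2)).measurable.inv).aestronglyMeasurable
  · rw [Filter.EventuallyLE, ae_restrict_iff' measurableSet_uIoc]
    apply Filter.Eventually.of_forall
    intro s hs
    rw [Set.uIoc_of_le (zero_le_one' ℝ)] at hs
    have h0 : (0:ℝ) ≤ 1 - s := by linarith [hs.2]
    have hrw : ((1 - s) ^ (-(1/2):ℝ)) = (Real.sqrt (1-s))⁻¹ := by
      rw [Real.rpow_neg h0, Real.sqrt_eq_rpow]
    have hnorm : ‖(Real.sqrt (1 - s ^ 2))⁻¹‖ = (Real.sqrt (1 - s^2))⁻¹ := by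
      rw [Real.norm_eq_abs, _root_.abs_of_nonneg (inv_nonneg.2 (Real.sqrt_nonneg _))]
    rw [hnorm, hrw]
    rcases hs.2.lt_or_eq with hlt | heq
    · have hpos : 0 < Real.sqrt (1 - s) := Real.sqrt_pos.2 (by linarith)
      have key : Real.sqrt (1 - s) ≤ Real.sqrt (1 - s^2) := by
        apply Real.sqrt_le_sqrt; nlinarith [hs.1.le]
      exact inv_anti₀ hpos key
    · subst heq; norm_num

lemma aesm_aux {x : ℂ} (hx : x ∈ U) {Kf : ℂ → ℝ → ℂ}
    (hK : ContinuousOn (fun p : ℂ × ℝ => Kf p.1 p.2) (U ×ˢ Icc (0:ℝ) 1)) :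
    AEStronglyMeasurable (fun s : ℝ => Kf x (s ^ 2) / (Real.sqrt (1 - s ^ 2) : ℂ))
      (volume.restrict (Ι (0:ℝ) 1)) := by
  have hcont : ContinuousOn (fun s : ℝ => Kf x (s ^ 2) / (Real.sqrt (1 - s ^ 2) : ℂ))
      (Ioo (0:ℝ) 1) := by
    apply ContinuousOn.div
    · have hmap : MapsTo (fun s : ℝ => (x, s ^ 2)) (Ioo (0:ℝ) 1) (U ×ˢ Icc (0:ℝ) 1) := by
        intro s hs
        refine ⟨hx, sq_nonneg s, ?_⟩
        show s ^ 2 ≤ 1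
        nlinarith [hs.1, hs.2]
      exact hK.comp ((continuous_const.prodMk (continuous_pow 2)).continuousOn) hmap
    · fun_prop
    · intro s hs
      have : (0:ℝ) < Real.sqrt (1 - s ^ 2) := Real.sqrt_pos.2 (by nlinarith [hs.1, hs.2])
      simp only [ne_eq, Complex.ofReal_eq_zero]
      exact ne_of_gt this
  have h1 := hcont.aestronglyMeasurable (μ := volume) measurableSet_Ioo
  rw [Set.uIoc_of_le (zero_le_one' ℝ)]
  rwa [Measure.restrict_congr_set Ioo_ae_eq_Ioc] at h1

noncomputable def G (z : ℂ) : ℂ :=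
  ∫ s in (0:ℝ)..1, Kc z (s ^ 2) / (Real.sqrt (1 - s ^ 2) : ℂ)

lemma norm_div_sqrt (w : ℂ) (r : ℝ) (hr : 0 ≤ r) :
    ‖w / (r : ℂ)‖ = ‖w‖ * r⁻¹ := by
  rw [norm_div, Complex.norm_real, Real.norm_eq_abs, _root_.abs_of_nonneg hr, div_eq_mul_inv]

lemma G_hasDerivAt {z0 : ℂ} (hz0 : z0 ∈ U) :
    HasDerivAt G (∫ s in (0:ℝ)..1, Kc' z0 (s ^ 2) / (Real.sqrt (1 - s ^ 2) : ℂ)) z0 := by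
  obtain ⟨ε, εpos, hball⟩ : ∃ ε > 0, closedBall z0 ε ⊆ U :=
    (Metric.nhds_basis_closedBall.mem_iff).1 (isOpen_U.mem_nhds hz0)
  have hSc : IsCompact (closedBall z0 ε ×ˢ Icc (0:ℝ) 1) :=
    (isCompact_closedBall z0 ε).prod isCompact_Icc
  have hsub : closedBall z0 ε ×ˢ Icc (0:ℝ) 1 ⊆ U ×ˢ Icc (0:ℝ) 1 :=
    Set.prod_mono hball (subset_refl _)
  obtain ⟨C, hC⟩ := hSc.exists_bound_of_continuousOn (continuousOn_Kc'.mono hsub)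
  obtain ⟨C₀, hC₀⟩ := hSc.exists_bound_of_continuousOn (continuousOn_Kc.mono hsub)
  have hsq : ∀ s : ℝ, s ∈ Ι (0:ℝ) 1 → s ^ 2 ∈ Icc (0:ℝ) 1 := by
    intro s hs
    rw [Set.uIoc_of_le (zero_le_one' ℝ)] at hs
    exact ⟨sq_nonneg s, by nlinarith [hs.1.le, hs.2]⟩
  have hC0 : 0 ≤ C := le_trans (norm_nonneg _) (hC (z0, 0) ⟨mem_closedBall_self εpos.le, by norm_num⟩)
  have hC₀0 : 0 ≤ C₀ :=
    le_trans (norm_nonneg _) (hC₀ (z0, 0) ⟨mem_closedBall_self εpos.le, by norm_num⟩)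
  have key := intervalIntegral.hasDerivAt_integral_of_dominated_loc_of_deriv_le
    (F := fun z s => Kc z (s ^ 2) / (Real.sqrt (1 - s ^ 2) : ℂ))
    (F' := fun z s => Kc' z (s ^ 2) / (Real.sqrt (1 - s ^ 2) : ℂ))
    (bound := fun s : ℝ => C * (Real.sqrt (1 - s ^ 2))⁻¹)
    (μ := volume) (a := 0) (b := 1) (x₀ := z0) (ball_mem_nhds z0 εpos)
    ?_ ?_ ?_ ?_ ?_ ?_
  · exact key.2
  · -- hF_meas
    filter_upwards [ball_mem_nhds z0 εpos] with x hx
    exact aesm_aux (hball (ball_subset_closedBall hx)) continuousOn_Kc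
  · -- hF_int
    apply (intervalIntegrable_inv_sqrt.const_mul C₀).mono_fun'
      (aesm_aux (hball (mem_closedBall_self εpos.le)) continuousOn_Kc)
    rw [Filter.EventuallyLE, ae_restrict_iff' measurableSet_uIoc]
    apply Filter.Eventually.of_forall
    intro s hs
    rw [norm_div_sqrt _ _ (Real.sqrt_nonneg _)]
    exact mul_le_mul_of_nonneg_right
      (hC₀ (z0, s ^ 2) ⟨mem_closedBall_self εpos.le, hsq s hs⟩)
      (inv_nonneg.2 (Real.sqrt_nonneg _))
  · -- hF'_meas
    exact aesm_aux (hball (mem_closedBall_self εpos.le)) continuousOn_Kc'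
  · -- h_bound
    apply Filter.Eventually.of_forall
    intro s hs x hxball
    rw [norm_div_sqrt _ _ (Real.sqrt_nonneg _)]
    exact mul_le_mul_of_nonneg_right
      (hC (x, s ^ 2) ⟨ball_subset_closedBall hxball, hsq s hs⟩)
      (inv_nonneg.2 (Real.sqrt_nonneg _))
  · exact intervalIntegrable_inv_sqrt.const_mul C
  · -- h_diff
    apply Filter.Eventually.of_forall
    intro s hs x hxball
    exact (hasDerivAt_Kc (hball (ball_subset_closedBall hxball)) (hsq s hs)).div_const _

lemma G_analyticOnNhd : AnalyticOnNhd ℂ G U := by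
  apply DifferentiableOn.analyticOnNhd ?_ isOpen_U
  intro z hz
  exact ((G_hasDerivAt hz).differentiableAt).differentiableWithinAt

noncomputable def g (α : ℝ) : ℝ :=
  ∫ s in (0:ℝ)..1, K α (s ^ 2) / Real.sqrt (1 - s ^ 2)

lemma ofReal_mem_U {α : ℝ} (hα : α ∈ Ioo (0:ℝ) (1/2)) : (α : ℂ) ∈ U := by
  refine ⟨by simpa using hα.1, by simpa using hα.2, ?_⟩
  simp only [Complex.ofReal_im, Complex.ofReal_re]
  have := hα.2
  nlinarith

lemma Kc_ofReal {α : ℝ} (hα : α ∈ Ioo (0:ℝ) (1/2)) {s : ℝ} (hs : s ∈ Icc (0:ℝ) 1) :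
    Kc (α : ℂ) s = ((K α s : ℝ) : ℂ) := by
  unfold Kc K
  have hbase : (0:ℝ) ≤ 1 - 2*α + α^2*s := by nlinarith [hα.1, hα.2, hs.1, hs.2]
  rw [show ((1:ℂ) - 2*(α:ℂ) + (α:ℂ)^2*(s:ℂ)) = ((1 - 2*α + α^2*s : ℝ) : ℂ) by
    push_cast; ring, show ((3:ℂ)/2) = (((3:ℝ)/2 : ℝ) : ℂ) by norm_num,
    ← Complex.ofReal_cpow hbase]
  push_cast
  ring

lemma G_ofReal {α : ℝ} (hα : α ∈ Ioo (0:ℝ) (1/2)) : G (α : ℂ) = ((g α : ℝ) : ℂ) := by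
  unfold G g
  rw [← intervalIntegral.integral_ofReal]
  apply intervalIntegral.integral_congr
  intro s hs
  rw [Set.uIcc_of_le (zero_le_one' ℝ)] at hs
  have hs2 : s ^ 2 ∈ Icc (0:ℝ) 1 := ⟨sq_nonneg s, by nlinarith [hs.1, hs.2]⟩
  simp only [Kc_ofReal hα hs2]
  norm_cast

lemma g_analyticAt {α : ℝ} (hα : α ∈ Ioo (0:ℝ) (1/2)) : AnalyticAt ℝ g α := by
  have h1 : AnalyticAt ℝ (fun t : ℝ => G (t : ℂ)) α :=
    ((G_analyticOnNhd _ (ofReal_mem_U hα)).restrictScalars).comp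
      (Complex.ofRealCLM.analyticAt α)
  have h2 : AnalyticAt ℝ (fun t : ℝ => (G (t : ℂ)).re) α :=
    (Complex.reCLM.analyticAt _).comp h1
  apply h2.congr
  filter_upwards [Ioo_mem_nhds hα.1 hα.2] with t ht
  rw [G_ofReal ht]
  simp

lemma contOn_K_sq {α : ℝ} (hα : α ∈ Ioo (0:ℝ) (1/2)) :
    ContinuousOn (fun s : ℝ => K α (s ^ 2)) (Icc (0:ℝ) 1) := by
  intro s hs
  apply ContinuousAt.continuousWithinAt
  have hbase : (0:ℝ) < 1 - 2*α + α^2*s^2 := by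
    nlinarith [hα.1, hα.2, hs.1, hs.2, sq_nonneg s]
  unfold K
  apply ContinuousAt.div
  · fun_prop
  · exact continuousAt_const.mul
      ((by fun_prop : ContinuousAt (fun s : ℝ => 1 - 2*α + α^2*s^2) s).rpow_const
        (Or.inl (ne_of_gt hbase)))
  · have h2 : (0:ℝ) < (1 - 2*α + α^2*s^2) ^ ((3:ℝ)/2) := Real.rpow_pos_of_pos hbase _
    have h3 : (0:ℝ) < 1 - 2*α := by nlinarith [hα.2]
    positivity

lemma intervalIntegrable_K {α : ℝ} (hα : α ∈ Ioo (0:ℝ) (1/2)) :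
    IntervalIntegrable (fun s : ℝ => K α (s ^ 2) / Real.sqrt (1 - s ^ 2)) volume 0 1 := by
  obtain ⟨M, hM⟩ := isCompact_Icc.exists_bound_of_continuousOn (contOn_K_sq hα)
  apply (intervalIntegrable_inv_sqrt.const_mul M).mono_fun' ?_ ?_
  · have hcont : ContinuousOn (fun s : ℝ => K α (s ^ 2) / Real.sqrt (1 - s ^ 2))
        (Ioo (0:ℝ) 1) := by
      apply ContinuousOn.div
      · exact (contOn_K_sq hα).mono Ioo_subset_Icc_self
      · fun_prop
      · intro s hs
        exact ne_of_gt (Real.sqrt_pos.2 (by nlinarith [hs.1, hs.2]))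
    have h1 := hcont.aestronglyMeasurable (μ := volume) measurableSet_Ioo
    rw [Set.uIoc_of_le (zero_le_one' ℝ)]
    rwa [Measure.restrict_congr_set Ioo_ae_eq_Ioc] at h1
  · rw [Filter.EventuallyLE, ae_restrict_iff' measurableSet_uIoc]
    apply Filter.Eventually.of_forall
    intro s hs
    rw [Set.uIoc_of_le (zero_le_one' ℝ)] at hs
    have hs2 : s ^ 2 ∈ Icc (0:ℝ) 1 := ⟨sq_nonneg s, by nlinarith [hs.1.le, hs.2]⟩
    have hsqrt : (0:ℝ) ≤ Real.sqrt (1 - s ^ 2) := Real.sqrt_nonneg _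
    rw [Real.norm_eq_abs, abs_div, div_eq_mul_inv, _root_.abs_of_nonneg hsqrt]
    exact mul_le_mul_of_nonneg_right
      (by simpa [Real.norm_eq_abs] using hM s ⟨hs.1.le, hs.2⟩) (inv_nonneg.2 hsqrt)

lemma K_pos {α : ℝ} (hα : α ∈ Ioo (0:ℝ) (1/2)) {s : ℝ} (hs : s ∈ Icc (0:ℝ) 1) :
    0 < K α s := by
  obtain ⟨h1, h2⟩ := hα
  have ha : (0:ℝ) < 1 - 2*α := by nlinarith
  have hb : (0:ℝ) < 1 - 2*α + α*s := by nlinarith [hs.1]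
  have hc : (0:ℝ) < 1 - 2*α + α^2*s := by nlinarith [hs.1, sq_nonneg α]
  have hr : (0:ℝ) < (1 - 2*α + α^2*s) ^ ((3:ℝ)/2) := Real.rpow_pos_of_pos hc _
  unfold K
  apply div_pos
  · have : (0:ℝ) < 1 - α := by nlinarith
    positivity
  · positivity

lemma g_pos {α : ℝ} (hα : α ∈ Ioo (0:ℝ) (1/2)) : 0 < g α := by
  unfold g
  apply intervalIntegral.intervalIntegral_pos_of_pos_on (intervalIntegrable_K hα)
  · intro s hs
    apply div_pos
    · exact K_pos hα ⟨sq_nonneg s, by nlinarith [hs.1, hs.2]⟩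
    · exact Real.sqrt_pos.2 (by nlinarith [hs.1, hs.2])
  · norm_num


/-- The period `T` is real-analytic and positive on `(0, y0/√2)`, hence so is the
frequency `ω = 2π/T`. -/
theorem stmt_7 (y0 : ℝ) (hy0 : 0 < y0) :
    AnalyticOnNhd ℝ (T y0) (Set.Ioo 0 (y0 / Real.sqrt 2)) ∧
    (∀ ξ0 ∈ Set.Ioo 0 (y0 / Real.sqrt 2), 0 < T y0 ξ0) ∧
    AnalyticOnNhd ℝ (fun ξ0 => 2 * Real.pi / T y0 ξ0)
      (Set.Ioo 0 (y0 / Real.sqrt 2)) := by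
  have hy2 : (0:ℝ) < y0 ^ 2 := by positivity
  have hmem : ∀ ξ0 ∈ Set.Ioo 0 (y0 / Real.sqrt 2), ξ0 ^ 2 / y0 ^ 2 ∈ Ioo (0:ℝ) (1/2) := by
    intro ξ0 hξ
    obtain ⟨h1, h2⟩ := hξ
    have hs2 : (0:ℝ) < Real.sqrt 2 := Real.sqrt_pos.2 (by norm_num)
    have h3 : ξ0 * Real.sqrt 2 < y0 := by
      rw [← lt_div_iff₀ hs2]; exact h2
    have h4 : ξ0 ^ 2 * 2 < y0 ^ 2 := by
      have := mul_self_lt_mul_self (by positivity) h3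
      have hss : Real.sqrt 2 * Real.sqrt 2 = 2 := Real.mul_self_sqrt (by norm_num)
      nlinarith
    constructor
    · positivity
    · rw [div_lt_div_iff₀ hy2 (by norm_num)]
      nlinarith
  have hT : T y0 = fun ξ0 => 4 * ξ0 ^ 2 * g (ξ0 ^ 2 / y0 ^ 2) := rfl
  have hTanal : AnalyticOnNhd ℝ (T y0) (Set.Ioo 0 (y0 / Real.sqrt 2)) := by
    intro ξ0 hξ
    have hq : AnalyticAt ℝ (fun ξ : ℝ => ξ ^ 2 / y0 ^ 2) ξ0 :=
      (analyticAt_id.pow 2).div analyticAt_const (ne_of_gt hy2)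
    have hgc : AnalyticAt ℝ (fun ξ : ℝ => g (ξ ^ 2 / y0 ^ 2)) ξ0 :=
      (g_analyticAt (hmem ξ0 hξ)).comp (f := fun ξ : ℝ => ξ ^ 2 / y0 ^ 2) hq
    have : AnalyticAt ℝ (fun ξ : ℝ => 4 * ξ ^ 2 * g (ξ ^ 2 / y0 ^ 2)) ξ0 :=
      (analyticAt_const.mul (analyticAt_id.pow 2)).mul hgc
    rw [hT]
    exact this
  have hTpos : ∀ ξ0 ∈ Set.Ioo 0 (y0 / Real.sqrt 2), 0 < T y0 ξ0 := by
    intro ξ0 hξ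
    have hg := g_pos (hmem ξ0 hξ)
    have h1 : (0:ℝ) < 4 * ξ0 ^ 2 := by
      have := hξ.1; positivity
    calc (0:ℝ) < 4 * ξ0 ^ 2 * g (ξ0 ^ 2 / y0 ^ 2) := mul_pos h1 hg
    _ = T y0 ξ0 := by rw [hT]
  refine ⟨hTanal, hTpos, ?_⟩
  intro ξ0 hξ
  exact analyticAt_const.div (hTanal ξ0 hξ) (ne_of_gt (hTpos ξ0 hξ))
end

section
/- Fix y0 > 0. The function T is strictly increasing on (0, y0/√2), and therefore ω = 2π/T is strictly decreasing on (0, y0/√2). Moreover, for every compact subset 𝔠 of (0, y0/√2) there exists c > 0 such that |ω'(ξ0)| ≥ c for all ξ0 ∈ 𝔠, where ω' denotes the derivative of ω. -/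
section LVaux
open Set MeasureTheory intervalIntegral Real

noncomputable def Fk (a u : ℝ) : ℝ := a * K a u

def Qpoly (a u : ℝ) : ℝ :=
  (1-2*a)^3*(1-3*a+3*a^2) + a*u*(1-2*a)^2*(9*a^2-10*a+4)
    + a^2*u^2*(1-2*a)*(7*a^2-7*a+3) + a^5*u^3

noncomputable def Fk' (a u : ℝ) : ℝ :=
  Qpoly a u / ((1-2*a)^2 * (1-2*a+a^2*u) ^ ((5:ℝ)/2))

lemma Ppos {a u : ℝ} (ha2 : 2*a < 1) (hu0 : 0 ≤ u) : 0 < 1-2*a+a^2*u := by nlinarith [sq_nonneg a]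

lemma Qpos {a u : ℝ} (ha : 0 < a) (ha2 : 2*a < 1) (hu0 : 0 ≤ u) (hu1 : u ≤ 1) :
    0 < Qpoly a u := by
  have hb : (0:ℝ) < 1-2*a := by linarith
  have h1 : (0:ℝ) < 1-3*a+3*a^2 := by nlinarith [sq_nonneg (2*a-1)]
  have h2 : (0:ℝ) < 9*a^2-10*a+4 := by nlinarith [sq_nonneg (3*a-2)]
  have h3 : (0:ℝ) < 7*a^2-7*a+3 := by nlinarith [sq_nonneg (2*a-1)]
  have t1 : 0 < (1-2*a)^3*(1-3*a+3*a^2) := by positivity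
  have t2 : 0 ≤ a*u*(1-2*a)^2*(9*a^2-10*a+4) := by positivity
  have t3 : 0 ≤ a^2*u^2*(1-2*a)*(7*a^2-7*a+3) := by positivity
  have t4 : 0 ≤ a^5*u^3 := by positivity
  unfold Qpoly; linarith

lemma Fk'pos {a u : ℝ} (ha : 0 < a) (ha2 : 2*a < 1) (hu0 : 0 ≤ u) (hu1 : u ≤ 1) :
    0 < Fk' a u := by
  have hb : (0:ℝ) < 1-2*a := by linarith
  have hP := Ppos ha2 hu0
  exact div_pos (Qpos ha ha2 hu0 hu1) (by positivity)

lemma Fkpos {a u : ℝ} (ha : 0 < a) (ha2 : 2*a < 1) (hu0 : 0 ≤ u) : 0 < Fk a u := by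
  have hb : (0:ℝ) < 1-2*a := by linarith
  have hP := Ppos ha2 hu0
  have hw : (0:ℝ) < 1-2*a+a*u := by nlinarith
  have h1 : (0:ℝ) < 1 - a := by linarith
  unfold Fk K
  have : (0:ℝ) < (1-2*a) * (1-2*a+a^2*u) ^ ((3:ℝ)/2) := by positivity
  positivity

lemma hasDerivAt_Fk {a : ℝ} (u : ℝ) (ha : 0 < a) (ha2 : 2*a < 1) (hu0 : 0 ≤ u) :
    HasDerivAt (fun a => Fk a u) (Fk' a u) a := by
  have hb : (0:ℝ) < 1-2*a := by linarith
  have hP : (0:ℝ) < 1-2*a+a^2*u := Ppos ha2 hu0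
  -- derivative of the numerator
  have h1 : HasDerivAt (fun a:ℝ => 1 - 2*a + a*u) (u - 2) a := by
    have := ((hasDerivAt_id a).const_mul (2:ℝ)).const_sub 1
    have := this.add ((hasDerivAt_id a).mul_const u)
    exact this.congr_deriv (by ring)
  have h2 : HasDerivAt (fun a:ℝ => a * (1-a)) (1 - 2*a) a := by
    have := (hasDerivAt_id a).mul ((hasDerivAt_id a).const_sub 1)
    exact this.congr_deriv (by simp only [id_eq]; ring)
  have hN : HasDerivAt (fun a:ℝ => a * (1-a) * (1-2*a+a*u)^2)
      ((1-2*a)*(1-2*a+a*u)^2 + a*(1-a)*(2*(1-2*a+a*u)*(u-2))) a := by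
    have := h2.mul (h1.pow 2)
    exact this.congr_deriv (by simp only [Pi.pow_apply]; ring)
  -- derivative of the denominator
  have h3 : HasDerivAt (fun a:ℝ => 1 - 2*a + a^2*u) (-2 + 2*a*u) a := by
    have := (((hasDerivAt_id a).const_mul (2:ℝ)).const_sub 1).add ((hasDerivAt_pow 2 a).mul_const u)
    exact this.congr_deriv (by push_cast; ring)
  have h4 : HasDerivAt (fun a:ℝ => (1-2*a+a^2*u) ^ ((3:ℝ)/2))
      ((-2 + 2*a*u) * ((3:ℝ)/2) * (1-2*a+a^2*u) ^ ((3:ℝ)/2 - 1)) a :=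
    h3.rpow_const (Or.inl hP.ne')
  have h5 : HasDerivAt (fun a:ℝ => (1:ℝ) - 2*a) (-2) a := by
    have := ((hasDerivAt_id a).const_mul (2:ℝ)).const_sub 1
    exact this.congr_deriv (by ring)
  have hD : HasDerivAt (fun a:ℝ => (1-2*a) * (1-2*a+a^2*u) ^ ((3:ℝ)/2))
      ((-2) * (1-2*a+a^2*u) ^ ((3:ℝ)/2)
        + (1-2*a) * ((-2 + 2*a*u) * ((3:ℝ)/2) * (1-2*a+a^2*u) ^ ((3:ℝ)/2 - 1))) a := h5.mul h4
  have hD0 : (1-2*a) * (1-2*a+a^2*u) ^ ((3:ℝ)/2) ≠ 0 := by positivity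
  have hdiv := hN.div hD hD0
  have hfun : (fun a => Fk a u) = fun a => a * (1-a) * (1-2*a+a*u)^2 /
      ((1-2*a) * (1-2*a+a^2*u) ^ ((3:ℝ)/2)) := by
    funext x; simp only [Fk, K]; ring
  rw [hfun]
  refine hdiv.congr_deriv (Eq.symm ?_)
  -- now prove the value identity
  set P := 1-2*a+a^2*u with hPdef
  have hs : (0:ℝ) < P ^ ((1:ℝ)/2) := Real.rpow_pos_of_pos hP _
  have key3 : (P ^ ((1:ℝ)/2))^2 = P := by
    rw [← Real.rpow_natCast (P ^ ((1:ℝ)/2)) 2, ← Real.rpow_mul hP.le]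
    norm_num
  have key1 : P ^ ((3:ℝ)/2) = P * P ^ ((1:ℝ)/2) := by
    rw [show (3:ℝ)/2 = 1 + 1/2 by norm_num, Real.rpow_add hP, Real.rpow_one]
  have key15 : P ^ ((3:ℝ)/2 - 1) = P ^ ((1:ℝ)/2) := by norm_num
  have key2 : P ^ ((5:ℝ)/2) = P^2 * P ^ ((1:ℝ)/2) := by
    rw [show (5:ℝ)/2 = 2 + 1/2 by norm_num, Real.rpow_add hP, Real.rpow_two]
  rw [Fk', Qpoly, key1, key15, key2]
  set s := P ^ ((1:ℝ)/2) with hsdef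
  have hsne : s ≠ 0 := ne_of_gt hs
  have hbne : (1-2*a) ≠ 0 := ne_of_gt hb
  have h6 : s^6 = P^3 := by rw [← key3]; ring
  have h8 : s^8 = P^4 := by rw [← key3]; ring
  have h4' : s^4 = P^2 := by rw [← key3]; ring
  field_simp
  rw [hPdef]
  ring_nf



lemma aesm_helper {f : ℝ → ℝ} (hf : ContinuousOn f (Ioo 0 1)) :
    AEStronglyMeasurable f (volume.restrict (Set.uIoc (0:ℝ) 1)) := by
  rw [uIoc_of_le (by norm_num : (0:ℝ) ≤ 1)]
  rw [← Measure.restrict_congr_set Ioo_ae_eq_Ioc]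
  exact hf.aestronglyMeasurable measurableSet_Ioo

lemma sqrt_one_sub_sq_pos {s : ℝ} (h0 : 0 ≤ s) (h1 : s < 1) : 0 < Real.sqrt (1 - s^2) := by
  apply Real.sqrt_pos.2; nlinarith

lemma cont_div_sqrt {f : ℝ → ℝ} (hf : ContinuousOn f (Ioo 0 1)) :
    ContinuousOn (fun s => f s / Real.sqrt (1 - s^2)) (Ioo 0 1) := by
  apply hf.div (Continuous.continuousOn (by fun_prop))
  intro x hx
  exact (sqrt_one_sub_sq_pos hx.1.le hx.2).ne'

lemma II_of_contOn {f : ℝ → ℝ} (hf : ContinuousOn f (Icc 0 1)) :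
    IntervalIntegrable (fun s => f s / Real.sqrt (1 - s^2)) volume 0 1 := by
  obtain ⟨C, hC⟩ := (isCompact_Icc).exists_bound_of_continuousOn hf
  have hC0 : 0 ≤ C := le_trans (norm_nonneg _) (hC 0 (by norm_num))
  -- the dominating function
  have hg : IntervalIntegrable (fun s : ℝ => C * (1-s) ^ (-(1/2) : ℝ)) volume 0 1 := by
    have h1 : IntervalIntegrable (fun s : ℝ => s ^ (-(1/2) : ℝ)) volume 0 1 :=
      intervalIntegrable_rpow' (by norm_num)
    have h2 : IntervalIntegrable (fun s : ℝ => (1-s) ^ (-(1/2) : ℝ)) volume 0 1 := by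
      have := (h1.comp_sub_left 1).symm
      simpa using this
    exact h2.const_mul C
  apply hg.mono_fun (aesm_helper (cont_div_sqrt (hf.mono Ioo_subset_Icc_self)))
  -- a.e. bound
  rw [uIoc_of_le (by norm_num : (0:ℝ) ≤ 1)]
  have hIoo : (Ioo (0:ℝ) 1) ∈ ae (volume.restrict (Ioc (0:ℝ) 1)) := by
    rw [← Measure.restrict_congr_set Ioo_ae_eq_Ioc]
    exact self_mem_ae_restrict measurableSet_Ioo
  filter_upwards [hIoo] with s hs
  have h0 : (0:ℝ) < s := hs.1
  have h1 : s < 1 := hs.2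
  have hsq : 0 < Real.sqrt (1 - s^2) := sqrt_one_sub_sq_pos h0.le h1
  have h1s : (0:ℝ) < 1 - s := by linarith
  have hcmp : Real.sqrt (1-s) ≤ Real.sqrt (1 - s^2) := by
    apply Real.sqrt_le_sqrt; nlinarith
  have hsp : 0 < Real.sqrt (1-s) := Real.sqrt_pos.2 h1s
  have key : (1-s) ^ (-(1/2) : ℝ) = 1 / Real.sqrt (1-s) := by
    rw [Real.rpow_neg h1s.le, Real.sqrt_eq_rpow, one_div]
    norm_num
  simp only [Real.norm_eq_abs]
  rw [abs_div, abs_of_nonneg hsq.le]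
  have hb : |f s| ≤ C := by
    have := hC s (Ioo_subset_Icc_self hs)
    simpa [Real.norm_eq_abs] using this
  calc |f s| / Real.sqrt (1 - s^2) ≤ C / Real.sqrt (1-s) := by
        apply div_le_div₀ hC0 hb hsp hcmp
    _ = C * (1-s) ^ (-(1/2) : ℝ) := by rw [key]; ring
    _ ≤ |C * (1-s) ^ (-(1/2) : ℝ)| := le_abs_self _

lemma contOn_Fk'_joint {lo hi : ℝ} (hlo : 0 < lo) (hhi : 2*hi < 1) :
    ContinuousOn (fun p : ℝ×ℝ => Fk' p.1 p.2) (Icc lo hi ×ˢ Icc 0 1) := by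
  have hden : ∀ p : ℝ×ℝ, p ∈ Icc lo hi ×ˢ Icc 0 1 →
      (0:ℝ) < (1-2*p.1)^2 * (1-2*p.1+p.1^2*p.2) ^ ((5:ℝ)/2) := by
    intro p hp
    obtain ⟨⟨hp1, hp2⟩, hp3, hp4⟩ := hp
    have h1 : 2*p.1 < 1 := by linarith
    have hb : (0:ℝ) < 1-2*p.1 := by linarith
    have hP : (0:ℝ) < 1-2*p.1+p.1^2*p.2 := Ppos h1 hp3
    positivity
  apply ContinuousOn.div
  · exact Continuous.continuousOn (by unfold Qpoly; fun_prop)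
  · apply ContinuousOn.mul (Continuous.continuousOn (by fun_prop))
    apply ContinuousOn.rpow_const (Continuous.continuousOn (by fun_prop))
    intro p _; right; norm_num
  · intro p hp; exact (hden p hp).ne'

lemma contOn_Fk'_u {a : ℝ} (ha : 0 < a) (ha2 : 2*a < 1) :
    ContinuousOn (fun u => Fk' a u) (Icc 0 1) := by
  have := (contOn_Fk'_joint ha ha2).comp
    (Continuous.continuousOn (f := fun u : ℝ => ((a, u) : ℝ×ℝ)) (by fun_prop))
    (fun u hu => by exact ⟨⟨le_refl a, le_refl a⟩, hu⟩)
  simpa [Function.comp_def] using this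

lemma contOn_Fk_u {a : ℝ} (ha : 0 < a) (ha2 : 2*a < 1) :
    ContinuousOn (fun u => Fk a u) (Icc 0 1) := by
  have hb : (0:ℝ) < 1-2*a := by linarith
  unfold Fk K
  apply ContinuousOn.mul continuousOn_const
  apply ContinuousOn.div
  · exact Continuous.continuousOn (by fun_prop)
  · apply ContinuousOn.mul continuousOn_const
    apply ContinuousOn.rpow_const (Continuous.continuousOn (by fun_prop))
    intro u _; right; norm_num
  · intro u hu
    have hP : (0:ℝ) < 1-2*a+a^2*u := Ppos ha2 hu.1
    positivity

lemma mapsTo_sq : ∀ s : ℝ, s ∈ Icc (0:ℝ) 1 → s^2 ∈ Icc (0:ℝ) 1 := by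
  intro s hs; exact ⟨sq_nonneg s, by nlinarith [hs.1, hs.2]⟩

lemma II_Fk {a : ℝ} (ha : 0 < a) (ha2 : 2*a < 1) :
    IntervalIntegrable (fun s => Fk a (s^2) / Real.sqrt (1-s^2)) volume 0 1 :=
  II_of_contOn ((contOn_Fk_u ha ha2).comp ((continuous_pow 2).continuousOn) mapsTo_sq)

lemma II_Fk' {a : ℝ} (ha : 0 < a) (ha2 : 2*a < 1) :
    IntervalIntegrable (fun s => Fk' a (s^2) / Real.sqrt (1-s^2)) volume 0 1 :=
  II_of_contOn ((contOn_Fk'_u ha ha2).comp ((continuous_pow 2).continuousOn) mapsTo_sq)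

lemma T_eq {y0 : ℝ} (hy0 : 0 < y0) (x : ℝ) :
    T y0 x = 4*y0^2 * ∫ s in (0:ℝ)..1, Fk (x^2/y0^2) (s^2) / Real.sqrt (1-s^2) := by
  unfold T
  have h : (fun s => Fk (x^2/y0^2) (s^2) / Real.sqrt (1-s^2))
      = fun s => (x^2/y0^2) * (K (x^2/y0^2) (s^2) / Real.sqrt (1-s^2)) := by
    funext s; unfold Fk; ring
  rw [h, intervalIntegral.integral_const_mul]
  have : y0^2 ≠ 0 := by positivity
  field_simp

lemma strictMono_Fk {u : ℝ} (hu0 : 0 ≤ u) (hu1 : u ≤ 1) :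
    StrictMonoOn (fun a => Fk a u) (Ioo 0 (1/2)) := by
  apply strictMonoOn_of_hasDerivWithinAt_pos (convex_Ioo (0:ℝ) (1/2)) ?_
      (f' := fun a => Fk' a u) ?_ ?_
  · intro a ha
    exact ((hasDerivAt_Fk u ha.1 (by linarith [ha.2]) hu0).continuousAt).continuousWithinAt
  · intro a ha
    rw [interior_Ioo] at ha
    exact ((hasDerivAt_Fk u ha.1 (by linarith [ha.2]) hu0).hasDerivWithinAt)
  · intro a ha
    rw [interior_Ioo] at ha
    exact Fk'pos ha.1 (by linarith [ha.2]) hu0 hu1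

lemma mem_half {y0 x : ℝ} (hy0 : 0 < y0) (hx : x ∈ Ioo 0 (y0 / Real.sqrt 2)) :
    x^2/y0^2 ∈ Ioo (0:ℝ) (1/2) := by
  have h2 : (0:ℝ) < Real.sqrt 2 := by positivity
  have hx2 : x^2 < y0^2/2 := by
    have := hx.2
    have h : x^2 < (y0 / Real.sqrt 2)^2 := by
      apply sq_lt_sq' _ this
      nlinarith [hx.1]
    calc x^2 < (y0 / Real.sqrt 2)^2 := h
      _ = y0^2/2 := by rw [div_pow, Real.sq_sqrt (by norm_num : (2:ℝ) ≥ 0)]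
  constructor
  · exact div_pos (pow_pos hx.1 2) (by positivity)
  · rw [div_lt_iff₀ (by positivity)]; linarith

lemma Tpos {y0 : ℝ} (hy0 : 0 < y0) {x : ℝ} (hx : x ∈ Ioo 0 (y0 / Real.sqrt 2)) :
    0 < T y0 x := by
  obtain ⟨ha, ha2⟩ := mem_half hy0 hx
  have ha2' : 2*(x^2/y0^2) < 1 := by linarith
  rw [T_eq hy0]
  apply mul_pos (by positivity)
  apply intervalIntegral_pos_of_pos_on (II_Fk ha ha2')
  · intro s hs
    exact div_pos (Fkpos ha ha2' (sq_nonneg _)) (sqrt_one_sub_sq_pos hs.1.le hs.2)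
  · norm_num

lemma T_strictMono {y0 : ℝ} (hy0 : 0 < y0) :
    StrictMonoOn (T y0) (Ioo 0 (y0 / Real.sqrt 2)) := by
  intro x1 hx1 x2 hx2 hlt
  obtain ⟨h1a, h1b⟩ := mem_half hy0 hx1
  obtain ⟨h2a, h2b⟩ := mem_half hy0 hx2
  have h1b' : 2*(x1^2/y0^2) < 1 := by linarith
  have h2b' : 2*(x2^2/y0^2) < 1 := by linarith
  rw [T_eq hy0, T_eq hy0]
  have halt : x1^2/y0^2 < x2^2/y0^2 := by
    have hy2 : (0:ℝ) < y0^2 := by positivity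
    exact (div_lt_div_iff_of_pos_right hy2).2 (by nlinarith [hx1.1])
  have key : (∫ s in (0:ℝ)..1, Fk (x1^2/y0^2) (s^2) / Real.sqrt (1-s^2))
      < ∫ s in (0:ℝ)..1, Fk (x2^2/y0^2) (s^2) / Real.sqrt (1-s^2) := by
    have hsub : 0 < ∫ s in (0:ℝ)..1,
        (Fk (x2^2/y0^2) (s^2) - Fk (x1^2/y0^2) (s^2)) / Real.sqrt (1-s^2) := by
      apply intervalIntegral_pos_of_pos_on
      · have := (II_Fk h2a h2b').sub (II_Fk h1a h1b')
        have heq : (fun s => Fk (x2^2/y0^2) (s^2) / Real.sqrt (1-s^2)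
            - Fk (x1^2/y0^2) (s^2) / Real.sqrt (1-s^2))
            = fun s => (Fk (x2^2/y0^2) (s^2) - Fk (x1^2/y0^2) (s^2)) / Real.sqrt (1-s^2) := by
          funext s; rw [div_sub_div_same]
        rwa [heq] at this
      · intro s hs
        apply div_pos _ (sqrt_one_sub_sq_pos hs.1.le hs.2)
        have := strictMono_Fk (u := s^2) (sq_nonneg s) (by nlinarith [hs.1, hs.2])
          ⟨h1a, h1b⟩ ⟨h2a, h2b⟩ halt
        simpa using sub_pos.2 this
      · norm_num
    have heq : (fun s => (Fk (x2^2/y0^2) (s^2) - Fk (x1^2/y0^2) (s^2)) / Real.sqrt (1-s^2))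
        = fun s => Fk (x2^2/y0^2) (s^2) / Real.sqrt (1-s^2)
          - Fk (x1^2/y0^2) (s^2) / Real.sqrt (1-s^2) := by
      funext s; rw [div_sub_div_same]
    rw [heq] at hsub
    rw [intervalIntegral.integral_sub (II_Fk h2a h2b') (II_Fk h1a h1b')] at hsub
    linarith
  have hI1 : 0 < ∫ s in (0:ℝ)..1, Fk (x1^2/y0^2) (s^2) / Real.sqrt (1-s^2) := by
    apply intervalIntegral_pos_of_pos_on (II_Fk h1a h1b')
    · intro s hs
      exact div_pos (Fkpos h1a h1b' (sq_nonneg _)) (sqrt_one_sub_sq_pos hs.1.le hs.2)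
    · norm_num
  have := mul_lt_mul_of_pos_left key (show (0:ℝ) < 4*y0^2 by positivity)
  linarith

lemma ball_props {y0 x₀ : ℝ} (hy0 : 0 < y0) (hx : x₀ ∈ Ioo 0 (y0 / Real.sqrt 2)) :
    ∃ ε > 0, x₀ - ε > 0 ∧ x₀ + ε < y0 / Real.sqrt 2 := by
  have hp : 0 < min x₀ (y0 / Real.sqrt 2 - x₀) := lt_min hx.1 (by linarith [hx.2, hx.1])
  refine ⟨min x₀ (y0 / Real.sqrt 2 - x₀) / 2, by linarith, ?_, ?_⟩
  · have := min_le_left x₀ (y0 / Real.sqrt 2 - x₀); linarith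
  · have := min_le_right x₀ (y0 / Real.sqrt 2 - x₀); linarith

lemma alpha_mem {y0 lo hi x : ℝ} (hy0 : 0 < y0) (hlo : 0 < lo) (hx1 : lo ≤ x) (hx2 : x ≤ hi) :
    x^2/y0^2 ∈ Icc (lo^2/y0^2) (hi^2/y0^2) := by
  have hy2 : (0:ℝ) < y0^2 := by positivity
  constructor
  · rw [div_le_div_iff₀ hy2 hy2]
    nlinarith [mul_nonneg (mul_nonneg (sub_nonneg.2 hx1) (show (0:ℝ) ≤ x + lo by linarith)) hy2.le]
  · rw [div_le_div_iff₀ hy2 hy2]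
    nlinarith [mul_nonneg (mul_nonneg (sub_nonneg.2 hx2) (show (0:ℝ) ≤ hi + x by linarith)) hy2.le]

lemma hasDerivAt_T {y0 : ℝ} (hy0 : 0 < y0) {x₀ : ℝ} (hx : x₀ ∈ Ioo 0 (y0 / Real.sqrt 2)) :
    HasDerivAt (T y0)
      (8*x₀ * ∫ t in (0:ℝ)..1, Fk' (x₀^2/y0^2) (t^2) / Real.sqrt (1-t^2)) x₀ := by
  obtain ⟨ε, hε, hlo', hhi'⟩ := ball_props hy0 hx
  have hx0 := hx.1
  set lo := (x₀-ε)^2/y0^2 with hlodef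
  set hi := (x₀+ε)^2/y0^2 with hhidef
  have hmemhi : x₀ + ε ∈ Ioo 0 (y0 / Real.sqrt 2) := ⟨by linarith, hhi'⟩
  have hlo : 0 < lo := div_pos (pow_pos (by linarith) 2) (by positivity)
  have hhi2 : hi < 1/2 := (mem_half hy0 hmemhi).2
  have hhi : 2*hi < 1 := by linarith
  have hmem : ∀ x ∈ Metric.ball x₀ ε, x^2/y0^2 ∈ Icc lo hi := by
    intro x hxb
    rw [Metric.mem_ball, Real.dist_eq, abs_lt] at hxb
    exact alpha_mem hy0 (by linarith) (by linarith) (by linarith)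
  have hballpos : ∀ x ∈ Metric.ball x₀ ε, (0 < x^2/y0^2 ∧ 2*(x^2/y0^2) < 1) := by
    intro x hxb
    obtain ⟨h1, h2⟩ := hmem x hxb
    exact ⟨lt_of_lt_of_le hlo h1, by
      have : x^2/y0^2 ≤ hi := h2
      linarith⟩
  -- bound on Fk' over the rectangle
  obtain ⟨M, hM⟩ := (isCompact_Icc.prod isCompact_Icc).exists_bound_of_continuousOn
    (contOn_Fk'_joint hlo hhi)
  have hlh : lo ≤ hi := by
    rw [hlodef, hhidef, div_le_div_iff₀ (by positivity) (by positivity)]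
    nlinarith [mul_nonneg (mul_nonneg (show (0:ℝ) ≤ 2*ε by linarith) (show (0:ℝ) ≤ 2*x₀ by linarith)) (sq_nonneg y0)]
  have hM0 : 0 ≤ M := le_trans (norm_nonneg _)
    (hM (lo, 0) ⟨⟨le_rfl, hlh⟩, le_rfl, zero_le_one⟩)
  set C := M * (2*(x₀+ε)/y0^2) with hCdef
  have hC0 : 0 ≤ C := by positivity
  have key := intervalIntegral.hasDerivAt_integral_of_dominated_loc_of_deriv_le
    (F := fun x t => Fk (x^2/y0^2) (t^2) / Real.sqrt (1-t^2))
    (F' := fun x t => Fk' (x^2/y0^2) (t^2) * (2*x/y0^2) / Real.sqrt (1-t^2))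
    (x₀ := x₀) (a := 0) (b := 1) (μ := volume)
    (bound := fun t => C / Real.sqrt (1-t^2)) (Metric.ball_mem_nhds x₀ hε) ?_ ?_ ?_ ?_ ?_ ?_
  · obtain ⟨-, hkey⟩ := key
    have hTfun : T y0 = fun x =>
        4*y0^2 * ∫ s in (0:ℝ)..1, Fk (x^2/y0^2) (s^2) / Real.sqrt (1-s^2) := by
      funext x; exact T_eq hy0 x
    rw [hTfun]
    have := hkey.const_mul (4*y0^2)
    refine this.congr_deriv (Eq.symm ?_)
    have heq : (fun t => Fk' (x₀^2/y0^2) (t^2) * (2*x₀/y0^2) / Real.sqrt (1-t^2))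
        = fun t => (2*x₀/y0^2) * (Fk' (x₀^2/y0^2) (t^2) / Real.sqrt (1-t^2)) := by
      funext t; ring
    rw [heq, intervalIntegral.integral_const_mul]
    have hy2 : y0^2 ≠ 0 := by positivity
    field_simp
    ring
  · -- measurability of F x for x near x₀
    filter_upwards [Metric.ball_mem_nhds x₀ hε] with x hxb
    obtain ⟨ha1, ha2⟩ := hballpos x hxb
    exact aesm_helper (cont_div_sqrt (((contOn_Fk_u ha1 ha2).comp
      ((continuous_pow 2).continuousOn) mapsTo_sq).mono Ioo_subset_Icc_self))
  · -- integrability of F x₀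
    obtain ⟨ha1, ha2⟩ := hballpos x₀ (Metric.mem_ball_self hε)
    exact II_Fk ha1 ha2
  · -- measurability of F' x₀
    obtain ⟨ha1, ha2⟩ := hballpos x₀ (Metric.mem_ball_self hε)
    apply aesm_helper
    apply cont_div_sqrt
    exact (((contOn_Fk'_u ha1 ha2).comp ((continuous_pow 2).continuousOn) mapsTo_sq).mul
      continuousOn_const).mono Ioo_subset_Icc_self
  · -- bound
    apply Filter.Eventually.of_forall
    intro t ht x hxb
    rw [uIoc_of_le (by norm_num : (0:ℝ) ≤ 1)] at ht
    show ‖Fk' (x^2/y0^2) (t^2) * (2*x/y0^2) / Real.sqrt (1-t^2)‖ ≤ C / Real.sqrt (1-t^2)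
    rcases eq_or_lt_of_le ht.2 with h1 | h1
    · -- t = 1
      have h0 : Real.sqrt (1 - t^2) = 0 := by rw [h1]; norm_num
      rw [h0, div_zero, div_zero, norm_zero]
    · have hsq : 0 < Real.sqrt (1-t^2) := sqrt_one_sub_sq_pos ht.1.le h1
      rw [Real.norm_eq_abs, abs_div, abs_of_nonneg hsq.le]
      gcongr
      rw [abs_mul]
      have hb1 : |Fk' (x^2/y0^2) (t^2)| ≤ M := by
        have := hM (x^2/y0^2, t^2) ⟨hmem x hxb, ⟨sq_nonneg t, by nlinarith [ht.1.le]⟩⟩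
        simpa [Real.norm_eq_abs] using this
      have hb2 : |2*x/y0^2| ≤ 2*(x₀+ε)/y0^2 := by
        rw [Metric.mem_ball, Real.dist_eq, abs_lt] at hxb
        rw [abs_div, abs_of_nonneg (by positivity : (0:ℝ) ≤ y0^2)]
        gcongr
        rw [abs_mul, abs_two]
        have : |x| ≤ x₀ + ε := by
          rw [abs_le]; constructor <;> [linarith [hlo'] ; linarith]
        linarith [this]
      calc |Fk' (x^2/y0^2) (t^2)| * |2*x/y0^2| ≤ M * (2*(x₀+ε)/y0^2) := by
            apply mul_le_mul hb1 hb2 (abs_nonneg _) hM0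
        _ = C := rfl
  · -- bound integrable
    exact II_of_contOn continuousOn_const
  · -- differentiability
    apply Filter.Eventually.of_forall
    intro t ht x hxb
    obtain ⟨ha1, ha2⟩ := hballpos x hxb
    have hx2 : HasDerivAt (fun x : ℝ => x^2/y0^2) (2*x/y0^2) x := by
      have := (hasDerivAt_pow 2 x).div_const (y0^2)
      exact this.congr_deriv (by push_cast; ring)
    exact ((hasDerivAt_Fk (t^2) ha1 ha2 (sq_nonneg t)).comp x hx2).div_const _

lemma J_lb {lo hi : ℝ} (hlo : 0 < lo) (hhi : 2*hi < 1) (hlh : lo ≤ hi) :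
    ∃ m > 0, ∀ a ∈ Icc lo hi, m ≤ ∫ t in (0:ℝ)..1, Fk' a (t^2) / Real.sqrt (1-t^2) := by
  have hS : IsCompact (Icc lo hi ×ˢ Icc (0:ℝ) 1) := isCompact_Icc.prod isCompact_Icc
  have hne : (Icc lo hi ×ˢ Icc (0:ℝ) 1).Nonempty := ⟨(lo,0), ⟨le_rfl, hlh⟩, le_rfl, zero_le_one⟩
  obtain ⟨p₀, hp₀, hmin⟩ := hS.exists_isMinOn hne (contOn_Fk'_joint hlo hhi)
  set m := Fk' p₀.1 p₀.2 with hmdef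
  have hm : 0 < m := Fk'pos (lt_of_lt_of_le hlo hp₀.1.1)
    (by linarith [hp₀.1.2] : 2*p₀.1 < 1) hp₀.2.1 hp₀.2.2
  refine ⟨m, hm, ?_⟩
  intro a ha
  have ha1 : 0 < a := lt_of_lt_of_le hlo ha.1
  have ha2 : 2*a < 1 := by linarith [ha.2]
  have hint := II_Fk' ha1 ha2
  calc m = ∫ _t in (0:ℝ)..1, (m:ℝ) := by simp
    _ ≤ ∫ t in (0:ℝ)..1, Fk' a (t^2) / Real.sqrt (1-t^2) := by
      apply intervalIntegral.integral_mono_ae_restrict (by norm_num : (0:ℝ) ≤ 1)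
        intervalIntegrable_const hint
      have hone : (volume.restrict (Icc (0:ℝ) 1)) {1} = 0 := by
        rw [Measure.restrict_apply (measurableSet_singleton 1)]
        exact measure_mono_null inter_subset_left Real.volume_singleton
      have hae : ∀ᵐ t ∂(volume.restrict (Icc (0:ℝ) 1)), t ≠ 1 := by
        rw [ae_iff]
        convert hone using 2
        ext t; simp
      filter_upwards [hae, ae_restrict_mem measurableSet_Icc] with t htne htmem
      have ht1 : t < 1 := lt_of_le_of_ne htmem.2 htne
      have hsq : 0 < Real.sqrt (1-t^2) := sqrt_one_sub_sq_pos htmem.1 ht1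
      have hsqle : Real.sqrt (1-t^2) ≤ 1 :=
        Real.sqrt_le_one.2 (by nlinarith [htmem.1])
      have hmle : m ≤ Fk' a (t^2) :=
        isMinOn_iff.1 hmin (a, t^2) ⟨ha, sq_nonneg t, by show t^2 ≤ 1; nlinarith [htmem.1, ht1.le]⟩
      have hF := Fk'pos ha1 ha2 (sq_nonneg t) (by nlinarith [htmem.1] : t^2 ≤ 1)
      calc m ≤ Fk' a (t^2) := hmle
        _ ≤ Fk' a (t^2) / Real.sqrt (1-t^2) := by
            rw [le_div_iff₀ hsq]
            nlinarith [mul_le_mul_of_nonneg_left hsqle hF.le]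


end LVaux

/-- `T` is strictly increasing, `ω = 2π/T` is strictly decreasing on `(0, y0/√2)`,
and `|ω'|` is bounded below on every compact subset. -/
theorem stmt_8 (y0 : ℝ) (hy0 : 0 < y0) :
    StrictMonoOn (T y0) (Set.Ioo 0 (y0 / Real.sqrt 2)) ∧
    StrictAntiOn (fun ξ0 => 2 * Real.pi / T y0 ξ0) (Set.Ioo 0 (y0 / Real.sqrt 2)) ∧
    ∀ 𝔠 : Set ℝ, IsCompact 𝔠 → 𝔠 ⊆ Set.Ioo 0 (y0 / Real.sqrt 2) →
      ∃ c > 0, ∀ ξ0 ∈ 𝔠, c ≤ |deriv (fun x => 2 * Real.pi / T y0 x) ξ0| := by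
  have hpi := Real.pi_pos
  refine ⟨T_strictMono hy0, ?_, ?_⟩
  · intro x1 hx1 x2 hx2 h
    exact div_lt_div_of_pos_left (by linarith) (Tpos hy0 hx1) (T_strictMono hy0 hx1 hx2 h)
  · intro 𝔠 hcomp hsub
    rcases 𝔠.eq_empty_or_nonempty with rfl | hne
    · exact ⟨1, one_pos, by simp⟩
    obtain ⟨a, ha⟩ := hcomp.exists_isLeast hne
    obtain ⟨b, hb⟩ := hcomp.exists_isGreatest hne
    have haI := hsub ha.1
    have hbI := hsub hb.1
    have hab : a ≤ b := hb.2 ha.1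
    set lo := a^2/y0^2 with hlodef
    set hi := b^2/y0^2 with hhidef
    have hlo : 0 < lo := (mem_half hy0 haI).1
    have hhi : 2*hi < 1 := by linarith [(mem_half hy0 hbI).2]
    have hlh : lo ≤ hi := by
      rw [hlodef, hhidef, div_le_div_iff₀ (by positivity) (by positivity)]
      nlinarith [mul_nonneg (mul_nonneg (sub_nonneg.2 hab)
        (show (0:ℝ) ≤ b + a by nlinarith [haI.1, hbI.1])) (sq_nonneg y0)]
    obtain ⟨m, hm, hmJ⟩ := J_lb hlo hhi hlh
    -- maximum of T on 𝔠
    have hTcont : ContinuousOn (T y0) 𝔠 := fun x hx =>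
      ((hasDerivAt_T hy0 (hsub hx)).continuousAt).continuousWithinAt
    obtain ⟨xM, hxM, hTmax⟩ := hcomp.exists_isMaxOn hne hTcont
    set MT := T y0 xM with hMTdef
    have hMT : 0 < MT := Tpos hy0 (hsub hxM)
    have hnum : 0 < 2*Real.pi*(8*(a*m)) := by
      nlinarith [mul_pos hpi (mul_pos haI.1 hm)]
    refine ⟨2*Real.pi*(8*(a*m))/MT^2, div_pos hnum (pow_pos hMT 2), ?_⟩
    intro x hx
    have hxI := hsub hx
    set J := ∫ t in (0:ℝ)..1, Fk' (x^2/y0^2) (t^2) / Real.sqrt (1-t^2) with hJdef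
    have hJm : m ≤ J := hmJ _ (alpha_mem hy0 haI.1 (ha.2 hx) (hb.2 hx))
    have hJpos : 0 < J := lt_of_lt_of_le hm hJm
    have hT := hasDerivAt_T hy0 hxI
    rw [← hJdef] at hT
    have hTx : 0 < T y0 x := Tpos hy0 hxI
    have homega : HasDerivAt (fun z => 2*Real.pi / T y0 z)
        ((0 * T y0 x - 2*Real.pi * (8*x*J)) / (T y0 x)^2) x :=
      (hasDerivAt_const x (2*Real.pi)).div hT hTx.ne'
    have hderiv : deriv (fun z => 2*Real.pi / T y0 z) x = -(2*Real.pi*(8*x*J))/(T y0 x)^2 := by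
      rw [homega.deriv]; ring
    have hnum2 : 0 < 2*Real.pi*(8*x*J) := by
      nlinarith [mul_pos hpi (mul_pos hxI.1 hJpos)]
    rw [hderiv, abs_div, abs_neg,
      abs_of_nonneg hnum2.le,
      abs_of_nonneg (sq_nonneg (T y0 x))]
    apply div_le_div₀ hnum2.le ?_ (pow_pos hTx 2) ?_
    · have hax' : a ≤ x := ha.2 hx
      have h1 : a*m ≤ x*J := mul_le_mul hax' hJm hm.le (by linarith [hxI.1])
      nlinarith [hpi]
    · have hmax : T y0 x ≤ MT := isMaxOn_iff.1 hTmax x hx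
      nlinarith [hTx]
end

section
/- Fix y0 > 0. For every ξ0 ∈ (0, y0/√2), setting α0 := ξ0²/y0², one has 2π·ξ0² ≤ T(ξ0) ≤ 2π·ξ0²/(1 − 2α0). Consequently T(ξ0)/ξ0² tends to 2π as ξ0 tends to 0 from the right. -/
open MeasureTheory intervalIntegral Real

lemma aux_poly_upper (α s : ℝ) (h0 : 0 ≤ α) (h1 : α ≤ 1/2) (hs0 : 0 ≤ s) (hs1 : s ≤ 1) :
    (1-α)^2 * (1-2*α+α*s)^4 ≤ (1-2*α+α^2*s)^3 := by
  have ha : (0:ℝ) ≤ 1-2*α := by linarith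
  have hq : (0:ℝ) ≤ α*(1-2*α)^3*(4-5*α+2*α^2) + α^2*s*(1-2*α)^2*(6-8*α+4*α^2)
      + α^3*s^2*(1-2*α)*(4-7*α+4*α^2) := by
    have t1 : (0:ℝ) ≤ α*(1-2*α)^3*(4-5*α+2*α^2) := by
      apply mul_nonneg (mul_nonneg h0 (pow_nonneg ha 3)); nlinarith [sq_nonneg (2*α-5/2)]
    have t2 : (0:ℝ) ≤ α^2*s*(1-2*α)^2*(6-8*α+4*α^2) := by
      apply mul_nonneg (mul_nonneg (mul_nonneg (sq_nonneg α) hs0) (sq_nonneg _))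
      nlinarith [sq_nonneg (2*α-2)]
    have t3 : (0:ℝ) ≤ α^3*s^2*(1-2*α)*(4-7*α+4*α^2) := by
      apply mul_nonneg (mul_nonneg (mul_nonneg (pow_nonneg h0 3) (sq_nonneg s)) ha)
      nlinarith [sq_nonneg (2*α-7/4)]
    linarith
  have t4 : (0:ℝ) ≤ α^4*s^3*(1-α)^2 :=
    mul_nonneg (mul_nonneg (pow_nonneg h0 4) (pow_nonneg hs0 3)) (sq_nonneg _)
  nlinarith [mul_nonneg (sub_nonneg.2 hs1) (by linarith :
    (0:ℝ) ≤ α*(1-2*α)^3*(4-5*α+2*α^2) + α^2*s*(1-2*α)^2*(6-8*α+4*α^2)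
      + α^3*s^2*(1-2*α)*(4-7*α+4*α^2) + α^4*s^3*(1-α)^2)]

lemma aux_poly_lower (α s : ℝ) (h0 : 0 ≤ α) (h1 : α ≤ 1/2) (hs0 : 0 ≤ s) :
    (1-2*α)^2 * (1-2*α+α^2*s)^3 ≤ (1-α)^2 * (1-2*α+α*s)^4 := by
  have hA : (0:ℝ) ≤ 1-2*α+α^2*s := by nlinarith [mul_nonneg (mul_nonneg h0 h0) hs0]
  have hB : 1-2*α+α^2*s ≤ 1-2*α+α*s := by
    nlinarith [mul_nonneg (mul_nonneg h0 (sub_nonneg.2 (by linarith : α ≤ 1))) hs0]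
  have h3 : (1-2*α+α^2*s)^3 ≤ (1-2*α+α*s)^3 := pow_le_pow_left₀ hA hB 3
  have h4 : (1-2*α)^2 ≤ (1-α)^2 * (1-2*α+α*s) := by
    nlinarith [sq_nonneg α, mul_nonneg h0 hs0, mul_nonneg (mul_nonneg h0 h0) hs0]
  have hB3 : (0:ℝ) ≤ (1-2*α+α*s)^3 := pow_nonneg (hA.trans hB) 3
  nlinarith [mul_le_mul_of_nonneg_right h4 hB3, mul_le_mul_of_nonneg_left h3 (sq_nonneg (1-2*α))]

lemma K_bounds {α s : ℝ} (h0 : 0 < α) (h1 : α < 1/2) (hs0 : 0 ≤ s) (hs1 : s ≤ 1) :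
    1 ≤ K α s ∧ K α s ≤ 1 / (1 - 2*α) := by
  have ha : (0:ℝ) < 1 - 2*α := by linarith
  have hA : (0:ℝ) < 1 - 2*α + α^2*s := by nlinarith [mul_nonneg (sq_nonneg α) hs0]
  have hB : (0:ℝ) < 1 - 2*α + α*s := by nlinarith [mul_nonneg h0.le hs0]
  have hR : (0:ℝ) < (1 - 2*α + α^2*s) ^ ((3:ℝ)/2) := Real.rpow_pos_of_pos hA _
  have hD : (0:ℝ) < (1-2*α) * (1 - 2*α + α^2*s) ^ ((3:ℝ)/2) := mul_pos ha hR
  have h32 : ((1 - 2*α + α^2*s) ^ ((3:ℝ)/2))^2 = (1 - 2*α + α^2*s)^3 := by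
    rw [← Real.rpow_natCast ((1 - 2*α + α^2*s) ^ ((3:ℝ)/2)) 2, ← Real.rpow_mul hA.le,
      ← Real.rpow_natCast (1 - 2*α + α^2*s) 3]
    norm_num
  have hKeq : K α s = (1 - α) * (1 - 2*α + α*s) ^ 2 /
      ((1 - 2*α) * (1 - 2*α + α^2*s) ^ ((3:ℝ)/2)) := rfl
  constructor
  · rw [hKeq, le_div_iff₀ hD, one_mul]
    apply le_of_pow_le_pow_left₀ two_ne_zero
      (mul_nonneg (by linarith : (0:ℝ) ≤ 1 - α) (sq_nonneg _))
    rw [mul_pow, mul_pow, h32]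
    have := aux_poly_lower α s h0.le h1.le hs0
    nlinarith [this]
  · rw [hKeq, div_le_div_iff₀ hD ha, one_mul]
    have key : (1 - α) * (1 - 2*α + α*s) ^ 2 ≤ (1 - 2*α + α^2*s) ^ ((3:ℝ)/2) := by
      apply le_of_pow_le_pow_left₀ two_ne_zero hR.le
      rw [mul_pow, h32]
      have := aux_poly_upper α s h0.le h1.le hs0 hs1
      nlinarith [this]
    calc (1 - α) * (1 - 2*α + α*s) ^ 2 * (1 - 2*α)
        ≤ (1 - 2*α + α^2*s) ^ ((3:ℝ)/2) * (1 - 2*α) := by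
          exact mul_le_mul_of_nonneg_right key ha.le
      _ = (1 - 2*α) * (1 - 2*α + α^2*s) ^ ((3:ℝ)/2) := by ring

lemma ig : IntervalIntegrable (fun s : ℝ => 1 / Real.sqrt (1 - s^2)) volume 0 1 := by
  have h1 : IntervalIntegrable (fun x : ℝ => x ^ (-(1/2) : ℝ)) volume 0 1 :=
    intervalIntegral.intervalIntegrable_rpow' (by norm_num)
  have h2 : IntervalIntegrable (fun x : ℝ => (1 - x) ^ (-(1/2) : ℝ)) volume 0 1 := by
    have := (h1.comp_sub_left 1).symm
    simpa using this
  apply h2.mono_fun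
  · apply Measurable.aestronglyMeasurable
    exact measurable_const.div ((measurable_const.sub (measurable_id.pow_const 2)).sqrt)
  · filter_upwards [MeasureTheory.ae_restrict_mem measurableSet_uIoc] with s hs
    rw [Set.uIoc_of_le (by norm_num : (0:ℝ) ≤ 1)] at hs
    obtain ⟨hs0, hs1⟩ := hs
    have hb : (0:ℝ) ≤ 1 - s := by linarith
    have key : 1 / Real.sqrt (1 - s^2) ≤ (1 - s) ^ (-(1/2) : ℝ) := by
      rw [Real.rpow_neg hb, ← Real.sqrt_eq_rpow, one_div]
      rcases eq_or_lt_of_le hs1 with h | h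
      · rw [h]; norm_num [Real.sqrt_zero]
      · apply inv_anti₀ (Real.sqrt_pos.2 (by nlinarith))
        apply Real.sqrt_le_sqrt; nlinarith
    have n2 : (0:ℝ) ≤ (1 - s) ^ (-(1/2) : ℝ) := Real.rpow_nonneg hb _
    rw [Real.norm_eq_abs, Real.norm_eq_abs, abs_of_nonneg (by positivity), abs_of_nonneg n2]
    exact key

lemma iv : ∫ s in (0:ℝ)..1, 1 / Real.sqrt (1 - s^2) = Real.pi / 2 := by
  have := intervalIntegral.integral_eq_sub_of_hasDeriv_right_of_le (f := Real.arcsin)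
    (f' := fun s => 1 / Real.sqrt (1 - s^2)) (by norm_num : (0:ℝ) ≤ 1)
    (Real.continuous_arcsin.continuousOn)
    (fun x hx => (Real.hasDerivAt_arcsin
      (by intro h; rw [h] at hx; exact absurd hx.1 (by norm_num))
      (ne_of_lt hx.2)).hasDerivWithinAt) ig
  rw [this, Real.arcsin_one, Real.arcsin_zero]; ring

lemma int_bounds {α : ℝ} (h0 : 0 < α) (h1 : α < 1/2) :
    Real.pi/2 ≤ (∫ s in (0:ℝ)..1, K α (s^2) / Real.sqrt (1 - s^2)) ∧
      (∫ s in (0:ℝ)..1, K α (s^2) / Real.sqrt (1 - s^2)) ≤ (1/(1-2*α)) * (Real.pi/2) := by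
  have ha : (0:ℝ) < 1 - 2*α := by linarith
  -- pointwise bounds on Icc 0 1
  have ptl : ∀ s ∈ Set.Icc (0:ℝ) 1,
      1 / Real.sqrt (1 - s^2) ≤ K α (s^2) / Real.sqrt (1 - s^2) := by
    intro s hs
    have hs2 : (0:ℝ) ≤ s^2 := sq_nonneg s
    have hs21 : s^2 ≤ 1 := by nlinarith [hs.1, hs.2]
    obtain ⟨hK1, _⟩ := K_bounds h0 h1 hs2 hs21
    have hw : (0:ℝ) ≤ 1 / Real.sqrt (1 - s^2) := by positivity
    calc 1 / Real.sqrt (1 - s^2) = 1 * (1 / Real.sqrt (1 - s^2)) := (one_mul _).symm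
      _ ≤ K α (s^2) * (1 / Real.sqrt (1 - s^2)) := mul_le_mul_of_nonneg_right hK1 hw
      _ = K α (s^2) / Real.sqrt (1 - s^2) := by rw [mul_one_div]
  have ptu : ∀ s ∈ Set.Icc (0:ℝ) 1,
      K α (s^2) / Real.sqrt (1 - s^2) ≤ (1/(1-2*α)) * (1 / Real.sqrt (1 - s^2)) := by
    intro s hs
    have hs2 : (0:ℝ) ≤ s^2 := sq_nonneg s
    have hs21 : s^2 ≤ 1 := by nlinarith [hs.1, hs.2]
    obtain ⟨_, hK2⟩ := K_bounds h0 h1 hs2 hs21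
    have hw : (0:ℝ) ≤ 1 / Real.sqrt (1 - s^2) := by positivity
    calc K α (s^2) / Real.sqrt (1 - s^2) = K α (s^2) * (1 / Real.sqrt (1 - s^2)) := by
          rw [mul_one_div]
      _ ≤ (1/(1-2*α)) * (1 / Real.sqrt (1 - s^2)) := mul_le_mul_of_nonneg_right hK2 hw
  -- integrability of the integrand
  have hgu : IntervalIntegrable (fun s : ℝ => (1/(1-2*α)) * (1 / Real.sqrt (1 - s^2)))
      volume 0 1 := ig.const_mul _
  have hmK : Measurable fun s : ℝ => K α (s^2) := by
    simp only [K]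
    apply Measurable.div
    · fun_prop
    · apply Measurable.mul measurable_const
      apply Continuous.measurable
      apply Continuous.rpow_const (by continuity)
      intro x; right; norm_num
  have hf : IntervalIntegrable (fun s : ℝ => K α (s^2) / Real.sqrt (1 - s^2)) volume 0 1 := by
    apply hgu.mono_fun
    · exact (hmK.div ((measurable_const.sub (measurable_id.pow_const 2)).sqrt)).aestronglyMeasurable
    · filter_upwards [MeasureTheory.ae_restrict_mem measurableSet_uIoc] with s hs
      rw [Set.uIoc_of_le (by norm_num : (0:ℝ) ≤ 1)] at hs
      have hsIcc : s ∈ Set.Icc (0:ℝ) 1 := ⟨hs.1.le, hs.2⟩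
      have l1 := ptl s hsIcc
      have l2 := ptu s hsIcc
      have hw : (0:ℝ) ≤ 1 / Real.sqrt (1 - s^2) := by positivity
      have hfn : (0:ℝ) ≤ K α (s^2) / Real.sqrt (1 - s^2) := le_trans hw l1
      rw [Real.norm_eq_abs, Real.norm_eq_abs, abs_of_nonneg hfn,
        abs_of_nonneg (by positivity : (0:ℝ) ≤ (1/(1-2*α)) * (1 / Real.sqrt (1 - s^2)))]
      exact l2
  constructor
  · have := intervalIntegral.integral_mono_on (by norm_num : (0:ℝ) ≤ 1) ig hf ptl
    rwa [iv] at this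
  · have := intervalIntegral.integral_mono_on (by norm_num : (0:ℝ) ≤ 1) hf hgu ptu
    rwa [intervalIntegral.integral_const_mul, iv] at this

/-- Two-sided bounds on the period `T` and the limit `T(ξ0)/ξ0² → 2π` as `ξ0 → 0⁺`. -/
theorem stmt_9 (y0 : ℝ) (hy0 : 0 < y0) :
    (∀ ξ0 ∈ Set.Ioo 0 (y0 / Real.sqrt 2),
      2 * Real.pi * ξ0 ^ 2 ≤ T y0 ξ0 ∧
        T y0 ξ0 ≤ 2 * Real.pi * ξ0 ^ 2 / (1 - 2 * (ξ0 ^ 2 / y0 ^ 2))) ∧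
    Filter.Tendsto (fun ξ0 => T y0 ξ0 / ξ0 ^ 2)
      (nhdsWithin 0 (Set.Ioi 0)) (nhds (2 * Real.pi)) := by
  have hy2 : (0:ℝ) < y0 ^ 2 := by positivity
  have main : ∀ ξ0 ∈ Set.Ioo 0 (y0 / Real.sqrt 2),
      2 * Real.pi * ξ0 ^ 2 ≤ T y0 ξ0 ∧
        T y0 ξ0 ≤ 2 * Real.pi * ξ0 ^ 2 / (1 - 2 * (ξ0 ^ 2 / y0 ^ 2)) := by
    intro ξ0 ⟨hξ0, hξ1⟩
    set α := ξ0 ^ 2 / y0 ^ 2 with hα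
    have h0 : 0 < α := by positivity
    have h1 : α < 1/2 := by
      rw [hα, div_lt_iff₀ hy2]
      have h2 : ξ0 * Real.sqrt 2 < y0 := by
        rw [← lt_div_iff₀ (Real.sqrt_pos.2 two_pos)]; exact hξ1
      nlinarith [Real.sq_sqrt (by norm_num : (0:ℝ) ≤ 2), Real.sqrt_nonneg 2,
        mul_pos hξ0 (Real.sqrt_pos.2 two_pos)]
    have ha : (0:ℝ) < 1 - 2*α := by linarith
    obtain ⟨il, iu⟩ := int_bounds h0 h1
    have hT : T y0 ξ0 = 4 * ξ0 ^ 2 * ∫ s in (0:ℝ)..1, K α (s^2) / Real.sqrt (1 - s^2) := rfl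
    have hx2 : (0:ℝ) < ξ0 ^ 2 := pow_pos hξ0 2
    constructor
    · rw [hT]
      nlinarith [mul_le_mul_of_nonneg_left il (by positivity : (0:ℝ) ≤ 4 * ξ0 ^ 2)]
    · rw [hT]
      have h2 : 4 * ξ0 ^ 2 * (∫ s in (0:ℝ)..1, K α (s^2) / Real.sqrt (1 - s^2))
          ≤ 4 * ξ0 ^ 2 * ((1/(1-2*α)) * (Real.pi/2)) :=
        mul_le_mul_of_nonneg_left iu (by positivity)
      have h3 : 4 * ξ0 ^ 2 * ((1/(1-2*α)) * (Real.pi/2))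
          = 2 * Real.pi * ξ0 ^ 2 / (1 - 2 * α) := by
        field_simp; ring
      linarith [h2, h3.le, h3.ge]
  refine ⟨main, ?_⟩
  -- squeeze
  have hb : 0 < y0 / Real.sqrt 2 := by positivity
  have hev : ∀ᶠ ξ0 in nhdsWithin (0:ℝ) (Set.Ioi 0), ξ0 ∈ Set.Ioo 0 (y0 / Real.sqrt 2) := by
    have : Set.Ioo (0:ℝ) (y0 / Real.sqrt 2) ∈ nhdsWithin (0:ℝ) (Set.Ioi 0) :=
      Ioo_mem_nhdsGT_of_mem ⟨le_refl 0, hb⟩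
    filter_upwards [this] with x hx using hx
  have hlow : ∀ᶠ ξ0 in nhdsWithin (0:ℝ) (Set.Ioi 0),
      2 * Real.pi ≤ T y0 ξ0 / ξ0 ^ 2 := by
    filter_upwards [hev] with ξ0 hξ
    have hx2 : (0:ℝ) < ξ0 ^ 2 := pow_pos hξ.1 2
    rw [le_div_iff₀ hx2]
    exact (main ξ0 hξ).1
  have hupfun : ∀ᶠ ξ0 in nhdsWithin (0:ℝ) (Set.Ioi 0),
      T y0 ξ0 / ξ0 ^ 2 ≤ 2 * Real.pi / (1 - 2 * (ξ0 ^ 2 / y0 ^ 2)) := by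
    filter_upwards [hev] with ξ0 hξ
    have hx2 : (0:ℝ) < ξ0 ^ 2 := pow_pos hξ.1 2
    have h1 : ξ0 ^ 2 / y0 ^ 2 < 1/2 := by
      rw [div_lt_iff₀ hy2]
      have h2 : ξ0 * Real.sqrt 2 < y0 := by
        rw [← lt_div_iff₀ (Real.sqrt_pos.2 two_pos)]; exact hξ.2
      nlinarith [Real.sq_sqrt (by norm_num : (0:ℝ) ≤ 2), Real.sqrt_nonneg 2,
        mul_pos hξ.1 (Real.sqrt_pos.2 two_pos)]
    have ha : (0:ℝ) < 1 - 2 * (ξ0 ^ 2 / y0 ^ 2) := by linarith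
    have := (main ξ0 hξ).2
    rw [div_le_div_iff₀ hx2 ha]
    calc T y0 ξ0 * (1 - 2 * (ξ0 ^ 2 / y0 ^ 2))
        ≤ (2 * Real.pi * ξ0 ^ 2 / (1 - 2 * (ξ0 ^ 2 / y0 ^ 2))) * (1 - 2 * (ξ0 ^ 2 / y0 ^ 2)) :=
          mul_le_mul_of_nonneg_right this ha.le
      _ = 2 * Real.pi * ξ0 ^ 2 := div_mul_cancel₀ _ ha.ne'
  have hup : Filter.Tendsto (fun ξ0 : ℝ => 2 * Real.pi / (1 - 2 * (ξ0 ^ 2 / y0 ^ 2)))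
      (nhdsWithin 0 (Set.Ioi 0)) (nhds (2 * Real.pi)) := by
    have hc : ContinuousAt (fun ξ0 : ℝ => 2 * Real.pi / (1 - 2 * (ξ0 ^ 2 / y0 ^ 2))) 0 := by
      apply ContinuousAt.div continuousAt_const
      · fun_prop
      · norm_num
    have h2 : ContinuousWithinAt (fun ξ0 : ℝ => 2 * Real.pi / (1 - 2 * (ξ0 ^ 2 / y0 ^ 2)))
        (Set.Ioi 0) 0 := hc.continuousWithinAt
    have h3 := h2.tendsto
    norm_num at h3
    exact h3
  exact tendsto_of_tendsto_of_tendsto_of_le_of_le' tendsto_const_nhds hup hlow hupfun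
end

section
/- Fix y0 > 0 and ξ0 > 0 with α0 := ξ0²/y0² < 1/2. Let I, φ : ℝ → ℝ be differentiable functions satisfying system (A), with I(0) = ξ0², φ(0) = π/2, and such that for all t ∈ ℝ: I(t) > 0, y0² − I(t)·sin²φ(t) > 0 and I(t)·sin²φ(t) ≤ ξ0². Assume there exists T with 0 < T ≤ 2π·ξ0²/(1 − 2α0) such that I(t + T) = I(t) and φ(t + T) = φ(t) + 2π for all t ∈ ℝ, and set ω0 := 2π/T. Then: (i) the function t ↦ φ(t) − ω0·t is T-periodic; (ii) for all t ∈ ℝ, |1/I(t) − 1/ξ0²| ≤ (6π/(y0²·(1 − 2α0)))·exp(6π·α0/(1 − 2α0)); (iii) there is an absolute constant C > 0, independent of y0, ξ0, I, φ and T, such that |φ'(t) − ω0| ≤ (C/(y0²·(1 − 2α0)))·exp(6π·α0/(1 − 2α0)) for all t ∈ ℝ. -/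
set_option maxHeartbeats 2000000 in
/-- Quantitative estimates along a periodic solution of the action–angle system (A):
periodicity of `φ(t) − ω0·t`, a bound on `|1/I − 1/ξ0²|`, and a bound on
`|φ' − ω0|` with an absolute constant `C`. -/
theorem stmt_10 :
    ∃ C : ℝ, 0 < C ∧
      ∀ (y0 ξ0 : ℝ) (I φ : ℝ → ℝ) (T : ℝ),
        0 < y0 → 0 < ξ0 → ξ0 ^ 2 / y0 ^ 2 < 1 / 2 →
        Differentiable ℝ I → Differentiable ℝ φ →
        (∀ t : ℝ,
          deriv I t = -((1 / (y0 ^ 2 - I t * Real.sin (φ t) ^ 2)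
                + 1 / (y0 ^ 2 + I t * Real.cos (φ t) ^ 2)) * Real.sin (2 * φ t) * I t) ∧
          deriv φ t = 1 / I t
                + Real.sin (φ t) ^ 2 / (y0 ^ 2 - I t * Real.sin (φ t) ^ 2)
                - Real.cos (φ t) ^ 2 / (y0 ^ 2 + I t * Real.cos (φ t) ^ 2)) →
        I 0 = ξ0 ^ 2 → φ 0 = Real.pi / 2 →
        (∀ t, 0 < I t) →
        (∀ t, 0 < y0 ^ 2 - I t * Real.sin (φ t) ^ 2) →
        (∀ t, I t * Real.sin (φ t) ^ 2 ≤ ξ0 ^ 2) →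
        0 < T → T ≤ 2 * Real.pi * ξ0 ^ 2 / (1 - 2 * (ξ0 ^ 2 / y0 ^ 2)) →
        (∀ t, I (t + T) = I t) → (∀ t, φ (t + T) = φ t + 2 * Real.pi) →
        (Function.Periodic (fun t => φ t - 2 * Real.pi / T * t) T ∧
          (∀ t, |1 / I t - 1 / ξ0 ^ 2| ≤
            6 * Real.pi / (y0 ^ 2 * (1 - 2 * (ξ0 ^ 2 / y0 ^ 2))) *
              Real.exp (6 * Real.pi * (ξ0 ^ 2 / y0 ^ 2) / (1 - 2 * (ξ0 ^ 2 / y0 ^ 2)))) ∧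
          (∀ t, |deriv φ t - 2 * Real.pi / T| ≤
            C / (y0 ^ 2 * (1 - 2 * (ξ0 ^ 2 / y0 ^ 2))) *
              Real.exp (6 * Real.pi * (ξ0 ^ 2 / y0 ^ 2) / (1 - 2 * (ξ0 ^ 2 / y0 ^ 2))))) := by
  refine ⟨6, by norm_num, ?_⟩
  intro y0 ξ0 I φ T hy0 hξ0 hα hI hφ hode hI0 hφ0 hIpos hApos hcons hT hTle hIper hφper
  have hy2 : (0:ℝ) < y0 ^ 2 := by positivity
  have hξ2 : (0:ℝ) < ξ0 ^ 2 := by positivity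
  have hα' : ξ0 ^ 2 * 2 < y0 ^ 2 := by
    have := (div_lt_iff₀ hy2).mp hα; linarith
  have hD : (0:ℝ) < y0 ^ 2 - 2 * ξ0 ^ 2 := by linarith
  have hAB0 : (0:ℝ) < y0 ^ 2 - ξ0 ^ 2 := by linarith
  have hB : ∀ t, 0 < y0 ^ 2 + I t * Real.cos (φ t) ^ 2 := fun t =>
    add_pos_of_pos_of_nonneg hy2 (mul_nonneg (hIpos t).le (sq_nonneg _))
  -- conserved quantity
  set G : ℝ → ℝ := fun t => Real.log (I t) - Real.log (y0 ^ 2 - I t * Real.sin (φ t) ^ 2)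
      - Real.log (y0 ^ 2 + I t * Real.cos (φ t) ^ 2) with hGdef
  have hG : ∀ t, HasDerivAt G 0 t := by
    intro t
    obtain ⟨h1, h2⟩ := hode t
    have hI' : HasDerivAt I (deriv I t) t := (hI t).hasDerivAt
    have hφ' : HasDerivAt φ (deriv φ t) t := (hφ t).hasDerivAt
    have hs : HasDerivAt (fun u => Real.sin (φ u)) (Real.cos (φ t) * deriv φ t) t :=
      (Real.hasDerivAt_sin (φ t)).comp t hφ'
    have hc : HasDerivAt (fun u => Real.cos (φ u)) (-Real.sin (φ t) * deriv φ t) t :=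
      (Real.hasDerivAt_cos (φ t)).comp t hφ'
    have hs2 : HasDerivAt (fun u => Real.sin (φ u) ^ 2)
        ((2 : ℕ) * Real.sin (φ t) ^ 1 * (Real.cos (φ t) * deriv φ t)) t := hs.pow 2
    have hc2 : HasDerivAt (fun u => Real.cos (φ u) ^ 2)
        ((2 : ℕ) * Real.cos (φ t) ^ 1 * (-Real.sin (φ t) * deriv φ t)) t := hc.pow 2
    have hA' : HasDerivAt (fun u => y0 ^ 2 - I u * Real.sin (φ u) ^ 2)
        (0 - (deriv I t * Real.sin (φ t) ^ 2
          + I t * ((2 : ℕ) * Real.sin (φ t) ^ 1 * (Real.cos (φ t) * deriv φ t)))) t :=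
      (hasDerivAt_const t (y0 ^ 2)).sub (hI'.mul hs2)
    have hB' : HasDerivAt (fun u => y0 ^ 2 + I u * Real.cos (φ u) ^ 2)
        (0 + (deriv I t * Real.cos (φ t) ^ 2
          + I t * ((2 : ℕ) * Real.cos (φ t) ^ 1 * (-Real.sin (φ t) * deriv φ t)))) t :=
      (hasDerivAt_const t (y0 ^ 2)).add (hI'.mul hc2)
    have hGt := ((hI'.log (hIpos t).ne').sub (hA'.log (hApos t).ne')).sub (hB'.log (hB t).ne')
    have hzero : deriv I t / I t
        - (0 - (deriv I t * Real.sin (φ t) ^ 2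
            + I t * ((2 : ℕ) * Real.sin (φ t) ^ 1 * (Real.cos (φ t) * deriv φ t))))
            / (y0 ^ 2 - I t * Real.sin (φ t) ^ 2)
        - (0 + (deriv I t * Real.cos (φ t) ^ 2
            + I t * ((2 : ℕ) * Real.cos (φ t) ^ 1 * (-Real.sin (φ t) * deriv φ t))))
            / (y0 ^ 2 + I t * Real.cos (φ t) ^ 2) = 0 := by
      rw [h1, h2, Real.sin_two_mul]
      have e1 := (hApos t).ne'
      have e2 := (hB t).ne'
      have e3 := (hIpos t).ne'
      field_simp
      ring
    rw [hzero] at hGt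
    exact hGt
  have hGconst : ∀ t, G t = G 0 :=
    fun t => is_const_of_deriv_eq_zero (fun x => (hG x).differentiableAt)
      (fun x => (hG x).deriv) t 0
  have key : ∀ t, I t * ((y0 ^ 2 - ξ0 ^ 2) * y0 ^ 2)
      = ξ0 ^ 2 * ((y0 ^ 2 - I t * Real.sin (φ t) ^ 2) * (y0 ^ 2 + I t * Real.cos (φ t) ^ 2)) := by
    intro t
    have h0 : G 0 = Real.log (ξ0 ^ 2) - Real.log (y0 ^ 2 - ξ0 ^ 2) - Real.log (y0 ^ 2) := by
      simp [hGdef, hI0, hφ0, Real.sin_pi_div_two, Real.cos_pi_div_two]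
    have h := hGconst t
    rw [h0, hGdef] at h
    have e1 := congrArg Real.exp h
    rw [Real.exp_sub, Real.exp_sub, Real.exp_sub, Real.exp_sub,
      Real.exp_log (hIpos t), Real.exp_log (hApos t), Real.exp_log (hB t),
      Real.exp_log hξ2, Real.exp_log hAB0, Real.exp_log hy2] at e1
    have e2 := (hApos t).ne'
    have e3 := (hB t).ne'
    field_simp at e1
    linarith [e1]
  -- pointwise bounds on I
  have hIlow : ∀ t, ξ0 ^ 2 ≤ I t := by
    intro t
    have k := key t
    have hAge : y0 ^ 2 - ξ0 ^ 2 ≤ y0 ^ 2 - I t * Real.sin (φ t) ^ 2 := by linarith [hcons t]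
    have hBge : y0 ^ 2 ≤ y0 ^ 2 + I t * Real.cos (φ t) ^ 2 := by
      have := mul_nonneg (hIpos t).le (sq_nonneg (Real.cos (φ t))); linarith
    have h1 : (y0 ^ 2 - ξ0 ^ 2) * y0 ^ 2
        ≤ (y0 ^ 2 - I t * Real.sin (φ t) ^ 2) * (y0 ^ 2 + I t * Real.cos (φ t) ^ 2) :=
      mul_le_mul hAge hBge hy2.le (le_trans hAB0.le hAge)
    have h2 : ξ0 ^ 2 * ((y0 ^ 2 - ξ0 ^ 2) * y0 ^ 2) ≤ I t * ((y0 ^ 2 - ξ0 ^ 2) * y0 ^ 2) := by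
      calc ξ0 ^ 2 * ((y0 ^ 2 - ξ0 ^ 2) * y0 ^ 2)
          ≤ ξ0 ^ 2 * ((y0 ^ 2 - I t * Real.sin (φ t) ^ 2) * (y0 ^ 2 + I t * Real.cos (φ t) ^ 2)) :=
            mul_le_mul_of_nonneg_left h1 hξ2.le
        _ = I t * ((y0 ^ 2 - ξ0 ^ 2) * y0 ^ 2) := (key t).symm
    exact le_of_mul_le_mul_right h2 (by positivity)
  have hIhigh : ∀ t, I t * (y0 ^ 2 - 2 * ξ0 ^ 2) ≤ ξ0 ^ 2 * y0 ^ 2 := by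
    intro t
    have k := key t
    have hAle : y0 ^ 2 - I t * Real.sin (φ t) ^ 2 ≤ y0 ^ 2 := by
      have := mul_nonneg (hIpos t).le (sq_nonneg (Real.sin (φ t))); linarith
    have hBle : y0 ^ 2 + I t * Real.cos (φ t) ^ 2 ≤ y0 ^ 2 + I t := by
      have := mul_le_of_le_one_right (hIpos t).le (Real.cos_sq_le_one (φ t)); linarith
    have h1 : (y0 ^ 2 - I t * Real.sin (φ t) ^ 2) * (y0 ^ 2 + I t * Real.cos (φ t) ^ 2)
        ≤ y0 ^ 2 * (y0 ^ 2 + I t) :=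
      mul_le_mul hAle hBle (hB t).le hy2.le
    have h2 : I t * ((y0 ^ 2 - ξ0 ^ 2) * y0 ^ 2) ≤ ξ0 ^ 2 * (y0 ^ 2 * (y0 ^ 2 + I t)) := by
      calc I t * ((y0 ^ 2 - ξ0 ^ 2) * y0 ^ 2)
          = ξ0 ^ 2 * ((y0 ^ 2 - I t * Real.sin (φ t) ^ 2) * (y0 ^ 2 + I t * Real.cos (φ t) ^ 2)) :=
            key t
        _ ≤ ξ0 ^ 2 * (y0 ^ 2 * (y0 ^ 2 + I t)) := mul_le_mul_of_nonneg_left h1 hξ2.le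
    have h3 : I t * (y0 ^ 2 - 2 * ξ0 ^ 2) * y0 ^ 2 ≤ ξ0 ^ 2 * y0 ^ 2 * y0 ^ 2 := by nlinarith [h2]
    exact le_of_mul_le_mul_right h3 hy2
  -- bound (ii) in raw form
  have hii : ∀ t, |1 / I t - 1 / ξ0 ^ 2| ≤ 2 / (y0 ^ 2 - 2 * ξ0 ^ 2) := by
    intro t
    have h1 : 1 / I t ≤ 1 / ξ0 ^ 2 := one_div_le_one_div_of_le hξ2 (hIlow t)
    rw [abs_sub_comm, abs_of_nonneg (by linarith)]
    rw [div_sub_div _ _ hξ2.ne' (hIpos t).ne', div_le_div_iff₀ (mul_pos hξ2 (hIpos t)) hD]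
    nlinarith [hIhigh t, mul_le_mul_of_nonneg_left (hIlow t) hξ2.le]
  -- rewrite the denominators appearing in the statement
  have hDeq : y0 ^ 2 * (1 - 2 * (ξ0 ^ 2 / y0 ^ 2)) = y0 ^ 2 - 2 * ξ0 ^ 2 := by
    field_simp
  have hEnn : (0:ℝ) ≤ 6 * Real.pi * (ξ0 ^ 2 / y0 ^ 2) / (1 - 2 * (ξ0 ^ 2 / y0 ^ 2)) := by
    apply div_nonneg
    · positivity
    · linarith
  have hexp : 1 ≤ Real.exp (6 * Real.pi * (ξ0 ^ 2 / y0 ^ 2) / (1 - 2 * (ξ0 ^ 2 / y0 ^ 2))) :=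
    Real.one_le_exp hEnn
  have hβ : (0:ℝ) < 1 - 2 * (ξ0 ^ 2 / y0 ^ 2) := by linarith
  refine ⟨?_, ?_, ?_⟩
  · -- (i) periodicity of φ(t) − ω0 t
    intro t
    simp only
    rw [hφper t]
    field_simp
    ring
  · -- (ii)
    intro t
    rw [hDeq]
    calc |1 / I t - 1 / ξ0 ^ 2| ≤ 2 / (y0 ^ 2 - 2 * ξ0 ^ 2) := hii t
      _ ≤ 6 * Real.pi / (y0 ^ 2 - 2 * ξ0 ^ 2) := by
          gcongr
          linarith [Real.pi_gt_three]
      _ ≤ 6 * Real.pi / (y0 ^ 2 - 2 * ξ0 ^ 2) *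
          Real.exp (6 * Real.pi * (ξ0 ^ 2 / y0 ^ 2) / (1 - 2 * (ξ0 ^ 2 / y0 ^ 2))) :=
          le_mul_of_one_le_right (by positivity) hexp
  · -- (iii)
    -- lower bound on ω0 = 2π/T
    have hω_low : 1 / ξ0 ^ 2 - 2 * Real.pi / T ≤ 2 / (y0 ^ 2 - 2 * ξ0 ^ 2) := by
      have h1 : T * (1 - 2 * (ξ0 ^ 2 / y0 ^ 2)) ≤ 2 * Real.pi * ξ0 ^ 2 :=
        (le_div_iff₀ hβ).mp hTle
      have h2 : (1 - 2 * (ξ0 ^ 2 / y0 ^ 2)) / ξ0 ^ 2 ≤ 2 * Real.pi / T := by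
        rw [div_le_div_iff₀ hξ2 hT]; linarith
      have h3 : 1 / ξ0 ^ 2 - (1 - 2 * (ξ0 ^ 2 / y0 ^ 2)) / ξ0 ^ 2 = 2 / y0 ^ 2 := by
        field_simp; ring
      have h4 : 2 / y0 ^ 2 ≤ 2 / (y0 ^ 2 - 2 * ξ0 ^ 2) :=
        div_le_div_of_nonneg_left (by norm_num) hD (by linarith)
      linarith
    -- upper bound on ω0 via the mean value argument
    set M : ℝ := 1 / ξ0 ^ 2 + 1 / (y0 ^ 2 - 2 * ξ0 ^ 2) with hM
    have hderiv_le : ∀ u, deriv φ u ≤ M := by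
      intro u
      rw [(hode u).2]
      have b1 : 1 / I u ≤ 1 / ξ0 ^ 2 := one_div_le_one_div_of_le hξ2 (hIlow u)
      have b2 : Real.sin (φ u) ^ 2 / (y0 ^ 2 - I u * Real.sin (φ u) ^ 2)
          ≤ 1 / (y0 ^ 2 - 2 * ξ0 ^ 2) :=
        div_le_div₀ (by norm_num) (Real.sin_sq_le_one _) hD (by linarith [hcons u])
      have b3 : 0 ≤ Real.cos (φ u) ^ 2 / (y0 ^ 2 + I u * Real.cos (φ u) ^ 2) :=
        div_nonneg (sq_nonneg _) (hB u).le
      linarith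
    have hmono : Monotone (fun u => M * u - φ u) := by
      apply monotone_of_deriv_nonneg
      · exact (differentiable_id.const_mul M).sub hφ
      · intro x
        have hd : HasDerivAt (fun u => M * u - φ u) (M - deriv φ x) x := by
          have := ((hasDerivAt_id' x).const_mul M).sub (hφ x).hasDerivAt; rw [mul_one] at this; exact this
        rw [hd.deriv]
        linarith [hderiv_le x]
    have h5 : M * 0 - φ 0 ≤ M * T - φ T := hmono hT.le
    have hφT : φ T = φ 0 + 2 * Real.pi := by simpa using hφper 0
    have h6 : 2 * Real.pi ≤ M * T := by rw [hφT] at h5; linarith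
    have hω_high : 2 * Real.pi / T ≤ M := (div_le_iff₀ hT).mpr (by linarith)
    have hω_high' : 2 * Real.pi / T ≤ 1 / ξ0 ^ 2 + 1 / (y0 ^ 2 - 2 * ξ0 ^ 2) := hω_high
    have hDinv : (0:ℝ) ≤ 1 / (y0 ^ 2 - 2 * ξ0 ^ 2) := by positivity
    -- combine
    intro t
    rw [hDeq]
    have hE6 : |deriv φ t - 2 * Real.pi / T| ≤ 6 / (y0 ^ 2 - 2 * ξ0 ^ 2) := by
      obtain ⟨bl, br⟩ := abs_le.mp (hii t)
      have b2 : Real.sin (φ t) ^ 2 / (y0 ^ 2 - I t * Real.sin (φ t) ^ 2)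
          ≤ 1 / (y0 ^ 2 - 2 * ξ0 ^ 2) :=
        div_le_div₀ (by norm_num) (Real.sin_sq_le_one _) hD (by linarith [hcons t])
      have b2' : 0 ≤ Real.sin (φ t) ^ 2 / (y0 ^ 2 - I t * Real.sin (φ t) ^ 2) :=
        div_nonneg (sq_nonneg _) (hApos t).le
      have b3 : Real.cos (φ t) ^ 2 / (y0 ^ 2 + I t * Real.cos (φ t) ^ 2)
          ≤ 1 / (y0 ^ 2 - 2 * ξ0 ^ 2) := by
        apply div_le_div₀ (by norm_num) (Real.cos_sq_le_one _) hD
        have := mul_nonneg (hIpos t).le (sq_nonneg (Real.cos (φ t)))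
        linarith
      have b3' : 0 ≤ Real.cos (φ t) ^ 2 / (y0 ^ 2 + I t * Real.cos (φ t) ^ 2) :=
        div_nonneg (sq_nonneg _) (hB t).le
      have h2D : 2 / (y0 ^ 2 - 2 * ξ0 ^ 2) = 2 * (1 / (y0 ^ 2 - 2 * ξ0 ^ 2)) := by ring
      have h6D : 6 / (y0 ^ 2 - 2 * ξ0 ^ 2) = 6 * (1 / (y0 ^ 2 - 2 * ξ0 ^ 2)) := by ring
      rw [(hode t).2, abs_le]
      constructor
      · linarith [hω_high', hDinv, bl, b2', b3, h2D, h6D]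
      · linarith [hω_low, hDinv, br, b2, b3', h2D, h6D]
    calc |deriv φ t - 2 * Real.pi / T| ≤ 6 / (y0 ^ 2 - 2 * ξ0 ^ 2) := hE6
      _ ≤ 6 / (y0 ^ 2 - 2 * ξ0 ^ 2) *
          Real.exp (6 * Real.pi * (ξ0 ^ 2 / y0 ^ 2) / (1 - 2 * (ξ0 ^ 2 / y0 ^ 2))) :=
          le_mul_of_one_le_right (by positivity) hexp
end
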